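/- arXiv:cs/0607068 — 8 statements merged into one kernel-verified Lean document; each statement's English description precedes it below -/
import Mathlib

section
/- Let C ⊆ 𝔽_q^n be the (n, n−r) CRC code with generator polynomial g(x) = g_0 + g_1x + ⋯ + g_{r−1}x^{r−1} + x^r. A vector c = (c_0, …, c_{n−1}) ∈ 𝔽_q^n belongs to the dual code C^⊥ if and only if c_i = −g_0c_{i−r} − g_1c_{i−r+1} − ⋯ − g_{r−1}c_{i−1} for every index i with r ≤ i ≤ n−1. -/
open Polynomial Finset

/-- A vector `c ∈ 𝔽_q^n` belongs to the dual of the `(n, n-r)` CRC code with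
generator polynomial `g` iff its components satisfy the linear recurrence
`c_i = -g_0 c_{i-r} - ⋯ - g_{r-1} c_{i-1}` for all `r ≤ i ≤ n-1`. -/
theorem stmt_0
    (p δ : ℕ) (hp : p.Prime) (hδ : 1 ≤ δ)
    (F : Type) [Field F] [Fintype F] (hcard : Fintype.card F = p ^ δ)
    (r n : ℕ) (g : Polynomial F)
    (hmonic : g.Monic) (hdeg : g.natDegree = r) (hg0 : g.coeff 0 ≠ 0)
    (hr : 0 < r) (hn : r < n)
    (c : Fin n → F) :
    (∀ w ∈ {w : Fin n → F | ∃ m : Polynomial F,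
        m.degree < ((n - r : ℕ) : WithBot ℕ) ∧ ∀ i : Fin n, w i = (g * m).coeff i},
      ∑ i, c i * w i = 0)
    ↔ ∀ i : Fin n, r ≤ (i : ℕ) →
        c i = -∑ j : Fin r, g.coeff j *
          c ⟨(i : ℕ) - r + (j : ℕ), by have := i.isLt; have := j.isLt; omega⟩ := by
  have hcr : g.coeff r = 1 := by
    have := hmonic.coeff_natDegree; rwa [hdeg] at this
  have key : ∀ k : ℕ, (hk : k + r < n) →
      ∑ i : Fin n, c i * (g * X ^ k).coeff i
        = c ⟨k + r, hk⟩ + ∑ j : Fin r, g.coeff j * c ⟨k + j, by have := j.isLt; omega⟩ := by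
    intro k hk
    have hs : ∑ i : Fin n, c i * (g * X ^ k).coeff i
        = ∑ i ∈ Finset.range n,
            (if h : i < n then c ⟨i, h⟩ else 0) * (g * X ^ k).coeff i := by
      rw [Finset.sum_range]
      refine Finset.sum_congr rfl fun i _ => ?_
      simp [i.isLt]
    rw [hs]
    have hsub : ∑ i ∈ Finset.range n,
        (if h : i < n then c ⟨i, h⟩ else 0) * (g * X ^ k).coeff i
        = ∑ i ∈ Finset.Icc k (k + r),
            (if h : i < n then c ⟨i, h⟩ else 0) * (g * X ^ k).coeff i := by
      refine (Finset.sum_subset ?_ ?_).symm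
      · intro x hx
        simp only [Finset.mem_Icc] at hx
        simp only [Finset.mem_range]; omega
      · intro x hx hx'
        simp only [Finset.mem_range] at hx
        simp only [Finset.mem_Icc, not_and, not_le] at hx'
        rw [coeff_mul_X_pow']
        rcases le_or_gt k x with h | h
        · have : r < x - k := by have := hx' h; omega
          rw [if_pos h, coeff_eq_zero_of_natDegree_lt (by omega), mul_zero]
        · rw [if_neg (by omega), mul_zero]
    have hicc : Finset.Icc k (k + r) = Finset.Ico k (k + r + 1) := by
      rw [Finset.Ico_add_one_right_eq_Icc]
    rw [hsub, hicc, Finset.sum_Ico_eq_sum_range]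
    have : k + r + 1 - k = r + 1 := by omega
    rw [this, Finset.sum_range_succ, add_comm]
    congr 1
    · rw [coeff_mul_X_pow', if_pos (by omega)]
      have h1 : k + r - k = r := by omega
      rw [h1, hcr, mul_one]
      simp [hk]
    · rw [Finset.sum_range]
      refine Finset.sum_congr rfl fun j _ => ?_
      rw [coeff_mul_X_pow', if_pos (by omega)]
      have hj : k + (j : ℕ) < n := by have := j.isLt; omega
      simp only [hj, dif_pos]
      rw [Nat.add_sub_cancel_left, mul_comm]
  constructor
  · intro H i hi
    have hik : (i : ℕ) - r + r < n := by have := i.isLt; omega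
    have hmem : (fun j : Fin n => (g * X ^ ((i : ℕ) - r)).coeff j) ∈
        {w : Fin n → F | ∃ m : Polynomial F,
          m.degree < ((n - r : ℕ) : WithBot ℕ) ∧ ∀ j : Fin n, w j = (g * m).coeff j} := by
      refine ⟨X ^ ((i : ℕ) - r), ?_, fun j => rfl⟩
      rw [degree_X_pow]
      exact_mod_cast (by have := i.isLt; omega : (i : ℕ) - r < n - r)
    have h0 := H _ hmem
    rw [key ((i : ℕ) - r) hik] at h0
    have hieq : (⟨(i : ℕ) - r + r, hik⟩ : Fin n) = i := by
      apply Fin.ext; simp; omega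
    rw [hieq] at h0
    exact eq_neg_of_add_eq_zero_left h0
  · intro H w hw
    obtain ⟨m, hdm, hwm⟩ := hw
    have hnd : m.natDegree < n - r := by
      rcases eq_or_ne m 0 with rfl | hm
      · simp; omega
      · exact (Polynomial.natDegree_lt_iff_degree_lt hm).2 hdm
    calc ∑ i : Fin n, c i * w i
        = ∑ i : Fin n, c i * (g * m).coeff i := by
          exact Finset.sum_congr rfl fun i _ => by rw [hwm]
      _ = ∑ i : Fin n, c i *
            (g * ∑ k ∈ Finset.range (n - r), Polynomial.monomial k (m.coeff k)).coeff i := by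
          rw [← Polynomial.as_sum_range' m (n - r) hnd]
      _ = ∑ i : Fin n, ∑ k ∈ Finset.range (n - r),
            m.coeff k * (c i * (g * X ^ k).coeff i) := by
          refine Finset.sum_congr rfl fun i _ => ?_
          rw [Finset.mul_sum, Polynomial.finset_sum_coeff, Finset.mul_sum]
          refine Finset.sum_congr rfl fun k _ => ?_
          have : g * Polynomial.monomial k (m.coeff k) = Polynomial.C (m.coeff k) * (g * X ^ k) := by
            rw [← Polynomial.C_mul_X_pow_eq_monomial]; ring
          rw [this, Polynomial.coeff_C_mul]; ring
      _ = ∑ k ∈ Finset.range (n - r),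
            m.coeff k * ∑ i : Fin n, c i * (g * X ^ k).coeff i := by
          rw [Finset.sum_comm]
          exact Finset.sum_congr rfl fun k _ => by rw [Finset.mul_sum]
      _ = 0 := by
          refine Finset.sum_eq_zero fun k hk => ?_
          simp only [Finset.mem_range] at hk
          have hkr : k + r < n := by omega
          rw [key k hkr]
          have := H ⟨k + r, hkr⟩ (by simp)
          simp only at this
          have h2 : ∑ j : Fin r, g.coeff j *
              c ⟨k + r - r + (j : ℕ), by have := j.isLt; omega⟩
              = ∑ j : Fin r, g.coeff j * c ⟨k + (j : ℕ), by have := j.isLt; omega⟩ := by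
            refine Finset.sum_congr rfl fun j _ => ?_
            simp only [Nat.add_sub_cancel]
          rw [h2] at this
          rw [this]
          ring
end

section
/- Let u_1, u_2 be two elements of R_g = 𝔽_q[x]/(g(x)), with minimal-degree representatives u_1(x), u_2(x), and let n > r. Then u_2 belongs to the x-orbit of u_1 if and only if C^⊥_{u_1} = C^⊥_{u_2}, where C^⊥_{u} denotes the set of length-n windows of the Kronecker sequence of u(x). -/
/-!
Write `r = deg g`. The Kronecker sequence of `u` is the sequence of `x^{r-1}`-coefficients of
the reduced representatives of `x^k u mod g`: shifting the sequence by one step corresponds to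
replacing `u` by `x u - c₀ g`, the reduced representative of `x u`. Hence the sequence of `v` is
the `k`-fold shift of the sequence of `u` exactly when `v ≡ x^k u`, and the first `r` terms of a
Kronecker sequence already determine `u`, so `n > r` terms suffice. Finally `x` is a unit of
the finite ring `𝔽_q[x]/(g)`, so `x^e ≡ 1` for some `e > 0`; every Kronecker sequence is then
periodic, and a shift of a periodic sequence has the same set of windows.
-/

open Polynomial

section Quotient

variable {K : Type*} [Field K] {g : K[X]}

lemma isUnit_mk_X_of_coeff_zero_ne_zero (hg0 : g.coeff 0 ≠ 0) :
    IsUnit (Ideal.Quotient.mk (Ideal.span {g}) X) := by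
  obtain ⟨a, b, hab⟩ : IsCoprime X g :=
    irreducible_X.coprime_iff_not_dvd.2 (by rwa [X_dvd_iff])
  refine IsUnit.of_mul_eq_one (Ideal.Quotient.mk _ a) ?_
  rw [← map_mul, mul_comm, ← sub_eq_iff_eq_add.2 hab.symm, map_sub, map_one,
    Ideal.Quotient.eq_zero_iff_mem.2 (Ideal.mul_mem_left _ _ (Ideal.mem_span_singleton_self g)),
    sub_zero]

lemma exists_pow_mk_X_eq_one [Finite K] (hm : g.Monic) (hg0 : g.coeff 0 ≠ 0) :
    ∃ e, 0 < e ∧ Ideal.Quotient.mk (Ideal.span {g}) X ^ e = 1 := by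
  have : Module.Finite K (AdjoinRoot g) := hm.finite_adjoinRoot
  have : Finite (K[X] ⧸ Ideal.span {g}) := Module.finite_of_finite K (M := AdjoinRoot g)
  obtain ⟨x, hx⟩ := isUnit_mk_X_of_coeff_zero_ne_zero hg0
  exact ⟨orderOf x, orderOf_pos x, by
    rw [← hx, ← Units.val_pow_eq_pow_val, pow_orderOf_eq_one, Units.val_one]⟩

lemma eq_of_mk_eq_of_degree_lt (hm : g.Monic) {u v : K[X]}
    (hu : u.degree < g.natDegree) (hv : v.degree < g.natDegree)
    (h : Ideal.Quotient.mk (Ideal.span {g}) u = Ideal.Quotient.mk (Ideal.span {g}) v) :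
    u = v := by
  rw [Ideal.Quotient.eq, Ideal.mem_span_singleton] at h
  rw [← degree_eq_natDegree hm.ne_zero] at hu hv
  rw [← (modByMonic_eq_self_iff hm).2 hu, ← (modByMonic_eq_self_iff hm).2 hv,
    modByMonic_eq_of_dvd_sub hm h]

end Quotient

section Reflect

variable {K : Type*} [Field K] {u : K[X]} {r : ℕ}

lemma natDegree_le_sub_one_of_degree_lt (hr : 0 < r) (hu : u.degree < r) :
    u.natDegree ≤ r - 1 := by
  rw [natDegree_le_iff_coeff_eq_zero]
  exact fun m hm => (degree_lt_iff_coeff_zero u r).1 hu m (by omega)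

lemma X_mul_reflect_sub_one (hr : 0 < r) (hu : u.degree < r) :
    X * reflect (r - 1) u = reflect r u := by
  have h := reflect_mul u 1 (natDegree_le_sub_one_of_degree_lt hr hu)
    (natDegree_one.trans_le zero_le_one)
  rw [mul_one, Nat.sub_one_add_one hr.ne', reflect_one, pow_one] at h
  rw [h, mul_comm]

lemma reflect_X_mul (hr : 0 < r) (hu : u.degree < r) :
    reflect r (X * u) = reflect (r - 1) u := by
  have h := reflect_mul u X (natDegree_le_sub_one_of_degree_lt hr hu) natDegree_X_le
  rw [Nat.sub_one_add_one hr.ne'] at h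
  rw [mul_comm, h, ← pow_one (X : K[X]), reflect_monomial, revAt_le le_rfl, Nat.sub_self,
    pow_zero, mul_one]

end Reflect

/-- With `r = deg g`, substituting `x ↦ 1/x` in `u(x)/g(x) = ∑ cᵢ x^{-(i+1)}` and multiplying
by `x^r` turns it into `(∑ cᵢ xⁱ) · rev g = x^{r-1} u(1/x)`. -/
def IsKroneckerSeq {K : Type*} [Field K] (g u : K[X]) (c : ℕ → K) : Prop :=
  u.degree < g.natDegree ∧
    PowerSeries.mk c * (g.reverse : PowerSeries K) = (reflect (g.natDegree - 1) u : PowerSeries K)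

namespace IsKroneckerSeq

variable {K : Type*} [Field K] {g u v : K[X]} {c d : ℕ → K}

lemma unique (hm : g.Monic) (hc : IsKroneckerSeq g u c) (hd : IsKroneckerSeq g u d) : c = d := by
  have hrev : (g.reverse : PowerSeries K) ≠ 0 := by
    rw [Ne, Polynomial.coe_eq_zero_iff, reverse_eq_zero]
    exact hm.ne_zero
  have h := mul_right_cancel₀ hrev (hc.2.trans hd.2.symm)
  funext i
  simpa using congrArg (PowerSeries.coeff i) h

lemma eq_of_forall_lt_natDegree (hr : 0 < g.natDegree) (hu : IsKroneckerSeq g u c)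
    (hv : IsKroneckerSeq g v d) (hcd : ∀ i < g.natDegree, c i = d i) : u = v := by
  set r := g.natDegree
  have htrunc :
      PowerSeries.trunc r (PowerSeries.mk c) = PowerSeries.trunc r (PowerSeries.mk d) := by
    ext i
    simp only [PowerSeries.coeff_trunc, PowerSeries.coeff_mk]
    split_ifs with hi
    exacts [hcd i hi, rfl]
  have htrunc_reflect {w : K[X]} (hw : w.degree < r) :
      PowerSeries.trunc r (reflect (r - 1) w : PowerSeries K) = reflect (r - 1) w :=
    PowerSeries.trunc_coe_eq_self <| natDegree_reflect_le.trans_lt <|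
      (max_le le_rfl (natDegree_le_sub_one_of_degree_lt hr hw)).trans_lt (Nat.sub_one_lt hr.ne')
  have hreflect : reflect (r - 1) u = reflect (r - 1) v := by
    rw [← htrunc_reflect hu.1, ← htrunc_reflect hv.1, ← hu.2, ← hv.2,
      ← PowerSeries.trunc_trunc_mul, htrunc, PowerSeries.trunc_trunc_mul]
  exact sub_eq_zero.1 (reflect_eq_zero_iff.1 (by rw [reflect_sub, hreflect, sub_self]))

lemma apply_zero (hm : g.Monic) (h : IsKroneckerSeq g u c) :
    c 0 = u.coeff (g.natDegree - 1) := by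
  have h0 := congrArg (PowerSeries.coeff 0) h.2
  rwa [PowerSeries.coeff_mul, Finset.Nat.antidiagonal_zero, Finset.sum_singleton,
    Polynomial.coeff_coe, Polynomial.coeff_coe, coeff_zero_reverse, hm.leadingCoeff, mul_one,
    coeff_reflect, revAt_zero, PowerSeries.coeff_mk] at h0

/-- `X * u - C (c 0) * g` is the reduced representative of `x u`: its `x^r`-coefficient is
`u_{r-1} - c 0 = 0`. -/
lemma shift (hm : g.Monic) (hr : 0 < g.natDegree) (h : IsKroneckerSeq g u c) :
    IsKroneckerSeq g (X * u - C (c 0) * g) (fun i => c (i + 1)) := by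
  set r := g.natDegree with hr_def
  have hc0 : c 0 = u.coeff (r - 1) := h.apply_zero hm
  have hdeg : (X * u - C (c 0) * g).degree < (r : WithBot ℕ) := by
    rw [degree_lt_iff_coeff_zero]
    intro m hrm
    obtain ⟨j, rfl⟩ : ∃ j, m = j + 1 := ⟨m - 1, by omega⟩
    rw [coeff_sub, coeff_X_mul, coeff_C_mul]
    rcases hrm.eq_or_lt with hj | hj
    · rw [← hj, hm.coeff_natDegree, mul_one, hc0, hj, Nat.add_sub_cancel, sub_self]
    · rw [(degree_lt_iff_coeff_zero u r).1 h.1 j (by omega),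
        coeff_eq_zero_of_natDegree_lt hj, mul_zero, sub_zero]
  refine ⟨hdeg, mul_left_cancel₀ (PowerSeries.X_ne_zero (R := K)) ?_⟩
  have hX_mul_shift : PowerSeries.X * PowerSeries.mk (fun i => c (i + 1)) =
      PowerSeries.mk c - PowerSeries.C (c 0) := by
    simpa using (PowerSeries.sub_const_eq_X_mul_shift (PowerSeries.mk c)).symm
  calc PowerSeries.X * (PowerSeries.mk (fun i => c (i + 1)) * (g.reverse : PowerSeries K))
      = (reflect (r - 1) u : PowerSeries K)
          - PowerSeries.C (c 0) * (g.reverse : PowerSeries K) := by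
        rw [← mul_assoc, hX_mul_shift, sub_mul, h.2]
    _ = ((reflect r (X * u - C (c 0) * g) : K[X]) : PowerSeries K) := by
        rw [reflect_sub, reflect_C_mul, reflect_X_mul hr h.1, reverse, ← hr_def, coe_sub,
          coe_mul, coe_C]
    _ = PowerSeries.X * (reflect (r - 1) (X * u - C (c 0) * g) : PowerSeries K) := by
        rw [← X_mul_reflect_sub_one hr hdeg, coe_mul, coe_X]

lemma exists_shift (hm : g.Monic) (hr : 0 < g.natDegree) (h : IsKroneckerSeq g u c) (k : ℕ) :
    ∃ w, IsKroneckerSeq g w (fun i => c (i + k)) ∧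
      Ideal.Quotient.mk (Ideal.span {g}) w
        = Ideal.Quotient.mk (Ideal.span {g}) X ^ k * Ideal.Quotient.mk (Ideal.span {g}) u := by
  induction k with
  | zero => exact ⟨u, h, by rw [pow_zero, one_mul]⟩
  | succ k ih =>
    obtain ⟨w, hw, hmk⟩ := ih
    refine ⟨_, by simpa only [add_assoc, Nat.add_comm 1 k] using hw.shift hm hr, ?_⟩
    rw [map_sub, map_mul, map_mul,
      Ideal.Quotient.eq_zero_iff_mem.2 (Ideal.mem_span_singleton_self g), mul_zero, sub_zero,
      hmk, pow_succ', mul_assoc]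

lemma eq_shift_of_mk_eq (hm : g.Monic) (hr : 0 < g.natDegree) (hu : IsKroneckerSeq g u c)
    (hv : IsKroneckerSeq g v d) {k : ℕ}
    (h : Ideal.Quotient.mk (Ideal.span {g}) v
        = Ideal.Quotient.mk (Ideal.span {g}) X ^ k * Ideal.Quotient.mk (Ideal.span {g}) u) :
    d = fun i => c (i + k) := by
  obtain ⟨w, hw, hmk⟩ := hu.exists_shift hm hr k
  rw [eq_of_mk_eq_of_degree_lt hm hv.1 hw.1 (h.trans hmk.symm)] at hv
  exact hv.unique hm hw

lemma mk_eq_X_pow_mul_of_forall_lt (hm : g.Monic) (hr : 0 < g.natDegree)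
    (hu : IsKroneckerSeq g u c) (hv : IsKroneckerSeq g v d) {k : ℕ}
    (hcd : ∀ i < g.natDegree, d i = c (i + k)) :
    Ideal.Quotient.mk (Ideal.span {g}) v
        = Ideal.Quotient.mk (Ideal.span {g}) X ^ k * Ideal.Quotient.mk (Ideal.span {g}) u := by
  obtain ⟨w, hw, hmk⟩ := hu.exists_shift hm hr k
  rw [hv.eq_of_forall_lt_natDegree hr hw hcd, hmk]

end IsKroneckerSeq

def windows {α : Type*} (n : ℕ) (c : ℕ → α) : Set (Fin n → α) :=
  {w | ∃ k : ℕ, w = fun i : Fin n => c (k + i)}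

lemma windows_shift_of_periodic {α : Type*} {c : ℕ → α} {e : ℕ} (hc : Function.Periodic c e)
    (he : 0 < e) (n k : ℕ) : windows n (fun i => c (i + k)) = windows n c := by
  ext w
  constructor
  · rintro ⟨m, rfl⟩
    exact ⟨m + k, funext fun i => congrArg c (by omega)⟩
  · rintro ⟨m, rfl⟩
    refine ⟨m + k * e - k, funext fun i => ?_⟩
    have hke : Function.Periodic c (k * e) := by simpa only [Nat.cast_id] using hc.nat_mul k
    have hk : k ≤ k * e := Nat.le_mul_of_pos_right k he
    rw [← hke (m + i)]
    exact congrArg c (by omega)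

theorem stmt_6_general
    (F : Type) [Field F] [Fintype F]
    (r n : ℕ) (g : Polynomial F)
    (hmonic : g.Monic) (hdeg : g.natDegree = r) (hg0 : g.coeff 0 ≠ 0)
    (hr : 0 < r) (hn : r < n)
    (u1 u2 : Polynomial F)
    (hu1 : u1.degree < (r : WithBot ℕ)) (hu2 : u2.degree < (r : WithBot ℕ))
    (c1 c2 : ℕ → F)
    (hc1 : PowerSeries.mk c1 * (g.reverse : PowerSeries F)
        = ((Polynomial.reflect (r - 1) u1 : Polynomial F) : PowerSeries F))
    (hc2 : PowerSeries.mk c2 * (g.reverse : PowerSeries F)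
        = ((Polynomial.reflect (r - 1) u2 : Polynomial F) : PowerSeries F)) :
    (∃ k : ℕ, Ideal.Quotient.mk (Ideal.span {g}) u2
        = Ideal.Quotient.mk (Ideal.span {g}) X ^ k * Ideal.Quotient.mk (Ideal.span {g}) u1)
    ↔ {w : Fin n → F | ∃ k : ℕ, w = fun i : Fin n => c1 (k + i)}
        = {w : Fin n → F | ∃ k : ℕ, w = fun i : Fin n => c2 (k + i)} := by
  subst hdeg
  have hk1 : IsKroneckerSeq g u1 c1 := ⟨hu1, hc1⟩
  have hk2 : IsKroneckerSeq g u2 c2 := ⟨hu2, hc2⟩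
  obtain ⟨e, he, hXe⟩ := exists_pow_mk_X_eq_one hmonic hg0
  have hper : Function.Periodic c1 e := fun i =>
    (congrFun (hk1.eq_shift_of_mk_eq hmonic hr hk1 (by rw [hXe, one_mul])) i).symm
  change _ ↔ windows n c1 = windows n c2
  constructor
  · rintro ⟨k, hk⟩
    rw [hk1.eq_shift_of_mk_eq hmonic hr hk2 hk, windows_shift_of_periodic hper he]
  · intro hwin
    obtain ⟨k, hk⟩ : (fun i : Fin n => c2 (0 + i)) ∈ windows n c1 := hwin ▸ ⟨0, rfl⟩
    refine ⟨k, hk1.mk_eq_X_pow_mul_of_forall_lt hmonic hr hk2 fun i hi => ?_⟩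
    simpa [add_comm] using congrFun hk ⟨i, hi.trans hn⟩

/-- For `u₁, u₂ ∈ R_g = 𝔽_q[x]/(g)` (with minimal-degree representatives
`u₁(x), u₂(x)` of degree `< r`), `u₂` lies in the `x`-orbit of `u₁` iff the sets
of length-`n` windows of their Kronecker sequences coincide. -/
theorem stmt_6
    (p δ : ℕ) (hp : p.Prime) (hδ : 1 ≤ δ)
    (F : Type) [Field F] [Fintype F] (hcard : Fintype.card F = p ^ δ)
    (r n : ℕ) (g : Polynomial F)
    (hmonic : g.Monic) (hdeg : g.natDegree = r) (hg0 : g.coeff 0 ≠ 0)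
    (hr : 0 < r) (hn : r < n)
    (u1 u2 : Polynomial F)
    (hu1 : u1.degree < (r : WithBot ℕ)) (hu2 : u2.degree < (r : WithBot ℕ))
    (c1 c2 : ℕ → F)
    (hc1 : PowerSeries.mk c1 * (g.reverse : PowerSeries F)
        = ((Polynomial.reflect (r - 1) u1 : Polynomial F) : PowerSeries F))
    (hc2 : PowerSeries.mk c2 * (g.reverse : PowerSeries F)
        = ((Polynomial.reflect (r - 1) u2 : Polynomial F) : PowerSeries F)) :
    (∃ k : ℕ, Ideal.Quotient.mk (Ideal.span {g}) u2
        = Ideal.Quotient.mk (Ideal.span {g}) X ^ k * Ideal.Quotient.mk (Ideal.span {g}) u1)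
    ↔ {w : Fin n → F | ∃ k : ℕ, w = fun i : Fin n => c1 (k + i)}
        = {w : Fin n → F | ∃ k : ℕ, w = fun i : Fin n => c2 (k + i)} :=
  stmt_6_general F r n g hmonic hdeg hg0 hr hn u1 u2 hu1 hu2 c1 c2 hc1 hc2
end

section
/- Let g(x) = Π_{l=1}^m g_l(x)^{e_l} be the factorization of g into distinct monic irreducible factors, let R_l = 𝔽_q[x]/(g_l(x)^{e_l}), and consider the diagonal action of multiplication by x on the product ring Π_{l=1}^m R_l. For each l, let 𝔠_l be an x-orbit of R_l with cardinality d_l and representative u_l. Set K_l = gcd(d_l, lcm(d_1, …, d_{l−1})) for l = 2, …, m. Then the tuples (u_1, x^{k_2}·u_2, …, x^{k_m}·u_m) with 0 ≤ k_l < K_l for l = 2, …, m lie in pairwise distinct orbits of the diagonal x-action, and every orbit of the diagonal x-action contained in 𝔠_1 × ⋯ × 𝔠_m contains exactly one of these tuples. -/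
open Polynomial

/-! Since `x` is a unit of the finite ring `R_l`, multiplication by `x` permutes `R_l`, so
`x^k·u_l = x^j·u_l` iff `k ≡ j (mod d_l)`. Writing `v_l = x^{a_l}·u_l`, the tuple `(x^{k_l}·u_l)`
lies in the diagonal orbit of `v` iff some `j` satisfies `k_l ≡ j + a_l (mod d_l)` for all `l`.
This is settled one factor at a time: once `j` works for all `l' < l`, it may only be changed by
multiples of `L_l = lcm(d_1, …, d_{l-1})`, and these move `j + a_l (mod d_l)` exactly through its
class modulo `K_l = gcd(d_l, L_l)`. Hence a representative `k_l < K_l` can be reached, and it is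
unique because any two admissible `j` agree modulo `L_l`. -/

namespace Function

variable {α : Type*} {f : α → α} {x : α}

theorem iterate_eq_iterate_iff_modEq_minimalPeriod (hx : x ∈ periodicPts f) {m n : ℕ} :
    f^[m] x = f^[n] x ↔ m ≡ n [MOD minimalPeriod f x] := by
  have hpos := minimalPeriod_pos_of_mem_periodicPts hx
  rw [← iterate_mod_minimalPeriod_eq (n := m), ← iterate_mod_minimalPeriod_eq (n := n)]
  exact iterate_eq_iterate_iff_of_lt_minimalPeriod (Nat.mod_lt _ hpos) (Nat.mod_lt _ hpos)

theorem ncard_range_iterate (hx : x ∈ periodicPts f) :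
    (Set.range fun n => f^[n] x).ncard = minimalPeriod f x := by
  have hpos := minimalPeriod_pos_of_mem_periodicPts hx
  have hrange : (Set.range fun n => f^[n] x) =
      (fun n => f^[n] x) '' ↑(Finset.range (minimalPeriod f x)) := by
    refine (Set.image_subset_range _ _).antisymm' ?_
    rintro _ ⟨n, rfl⟩
    exact ⟨n % minimalPeriod f x, by simpa using Nat.mod_lt _ hpos, iterate_mod_minimalPeriod_eq⟩
  rw [hrange, Set.InjOn.ncard_image, Set.ncard_coe_finset, Finset.card_range]
  intro m hm n hn
  simp only [Finset.coe_range, Set.mem_Iio] at hm hn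
  exact (iterate_eq_iterate_iff_of_lt_minimalPeriod hm hn).mp

end Function

section PowMulOrbit

open Function

variable {M : Type*} [Monoid M] [Finite M] {x : M}

theorem IsUnit.ncard_setOf_pow_mul (hx : IsUnit x) (u : M) :
    {w | ∃ k : ℕ, w = x ^ k * u}.ncard = minimalPeriod (x * ·) u := by
  rw [← ncard_range_iterate (hx.mul_right_injective.mem_periodicPts u)]
  congr 1
  ext w
  simp [mul_left_iterate_apply, eq_comm]

theorem IsUnit.pow_mul_eq_pow_mul_iff_modEq (hx : IsUnit x) (u : M) {k j : ℕ} :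
    x ^ k * u = x ^ j * u ↔ k ≡ j [MOD minimalPeriod (x * ·) u] := by
  simpa only [mul_left_iterate_apply] using
    iterate_eq_iterate_iff_modEq_minimalPeriod (hx.mul_right_injective.mem_periodicPts u)

end PowMulOrbit

theorem Ideal.Quotient.isUnit_mk_of_isCoprime {R : Type*} [CommRing R] {a f : R}
    (h : IsCoprime a f) : IsUnit (Ideal.Quotient.mk (Ideal.span {f}) a) := by
  obtain ⟨s, t, hst⟩ := h
  refine IsUnit.of_mul_eq_one (Ideal.Quotient.mk _ s) ?_
  rw [← map_mul, ← map_one (Ideal.Quotient.mk _), Ideal.Quotient.eq, Ideal.mem_span_singleton]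
  exact ⟨-t, by linear_combination hst⟩

theorem Polynomial.isCoprime_X_of_coeff_zero_ne_zero {K : Type*} [Field K] {f : K[X]}
    (hf : f.coeff 0 ≠ 0) : IsCoprime X f :=
  irreducible_X.coprime_iff_not_dvd.mpr (mt X_dvd_iff.mp hf)

theorem Polynomial.finite_quotient_span_singleton {K : Type*} [Field K] [Finite K] {f : K[X]}
    (hf : f ≠ 0) : Finite (K[X] ⧸ Ideal.span {f}) :=
  have := (AdjoinRoot.powerBasis hf).finite
  Module.finite_of_finite K (M := AdjoinRoot f)

namespace Nat

theorem exists_add_mul_mod_eq_mod_gcd (c L : ℕ) {d : ℕ} (hd : 0 < d) :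
    ∃ t : ℕ, (c + t * L) % d = c % d.gcd L := by
  have : NeZero d := ⟨hd.ne'⟩
  set K := d.gcd L
  -- Bézout gives `K ≡ L * gcdB d L (mod d)`, so this `t` cancels the multiple `K * (c / K)` of `c`.
  obtain ⟨t, ht⟩ := ZMod.natCast_zmod_surjective (-((c / K : ℕ) : ZMod d) * (d.gcdB L : ZMod d))
  refine ⟨t, ?_⟩
  have hK : (K : ZMod d) = L * d.gcdB L := by
    have := congrArg (Int.cast : ℤ → ZMod d) (Nat.gcd_eq_gcd_ab d L)
    push_cast at this
    rw [this, ZMod.natCast_self]; ring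
  have hc : (c : ZMod d) = K * (c / K : ℕ) + (c % K : ℕ) := by
    rw [← Nat.cast_mul, ← Nat.cast_add, Nat.div_add_mod]
  have hmod : c + t * L ≡ c % K [MOD d] := by
    rw [← ZMod.natCast_eq_natCast_iff]
    push_cast
    rw [ht, hc, hK]; ring
  have hlt : c % K < d :=
    (Nat.mod_lt _ (Nat.gcd_pos_of_pos_left L hd)).trans_le (Nat.gcd_le_left L hd)
  exact Eq.trans hmod (Nat.mod_eq_of_lt hlt)

theorem modEq_finset_lcm {ι : Type*} {s : Finset ι} {f : ι → ℕ} {a b : ℕ}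
    (h : ∀ i ∈ s, a ≡ b [MOD f i]) : a ≡ b [MOD s.lcm f] :=
  Nat.modEq_iff_dvd.mpr <| Int.natCast_dvd.mpr <|
    Finset.lcm_dvd fun i hi => Int.natCast_dvd.mp (Nat.modEq_iff_dvd.mp (h i hi))

theorem eq_and_modEq_of_lt_gcd {d L a j j' k k' : ℕ} (hj : j ≡ j' [MOD L])
    (hk : k ≡ j + a [MOD d]) (hk' : k' ≡ j' + a [MOD d])
    (hlt : k < d.gcd L) (hlt' : k' < d.gcd L) : k = k' ∧ j ≡ j' [MOD d] := by
  have hgd := Nat.gcd_dvd_left d L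
  have heq : k = k' :=
    ((hk.of_dvd hgd).trans (((hj.of_dvd (Nat.gcd_dvd_right d L)).add_right a).trans
      (hk'.of_dvd hgd).symm)).eq_of_lt_of_lt hlt hlt'
  subst heq
  exact ⟨rfl, Nat.ModEq.add_right_cancel' a (hk.symm.trans hk')⟩

end Nat

section PrefixGcd

open Finset

variable {m : ℕ} (d a : Fin m → ℕ)

theorem exists_add_mod_lt_gcd_lcm (hd : ∀ l, 0 < d l) :
    ∃ j : ℕ, ∀ l, (j + a l) % d l < (d l).gcd ((univ.filter (· < l)).lcm d) := by
  suffices ∀ r : ℕ, ∃ j : ℕ, ∀ l : Fin m, (l : ℕ) < r →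
      (j + a l) % d l < (d l).gcd ((univ.filter (· < l)).lcm d) from
    (this m).imp fun j hj l => hj l l.isLt
  intro r
  induction r with
  | zero => exact ⟨0, fun l hl => absurd hl (Nat.not_lt_zero _)⟩
  | succ r ih =>
    obtain ⟨j, hj⟩ := ih
    rcases le_or_gt m r with hr | hr
    · exact ⟨j, fun l hl => hj l (by omega)⟩
    set l₀ : Fin m := ⟨r, hr⟩
    set L := (univ.filter (· < l₀)).lcm d
    obtain ⟨t, ht⟩ := Nat.exists_add_mul_mod_eq_mod_gcd (j + a l₀) L (hd l₀)
    refine ⟨j + t * L, fun l hl => ?_⟩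
    rcases Nat.lt_succ_iff_lt_or_eq.mp hl with hlr | hlr
    · obtain ⟨q, hq⟩ : d l ∣ L := dvd_lcm (mem_filter.mpr ⟨mem_univ l, Fin.lt_def.mpr hlr⟩)
      rw [hq, show j + t * (d l * q) + a l = j + a l + t * q * d l by ring,
        Nat.add_mul_mod_self_right]
      exact hj l hlr
    · obtain rfl : l = l₀ := Fin.ext hlr
      rw [add_right_comm, ht]
      exact Nat.mod_lt _ (Nat.gcd_pos_of_pos_left _ (hd l₀))

theorem eq_of_lt_gcd_lcm_of_modEq {k k' : Fin m → ℕ} {j j' : ℕ}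
    (hk : ∀ l, k l < (d l).gcd ((univ.filter (· < l)).lcm d))
    (hk' : ∀ l, k' l < (d l).gcd ((univ.filter (· < l)).lcm d))
    (hkj : ∀ l, k l ≡ j + a l [MOD d l]) (hkj' : ∀ l, k' l ≡ j' + a l [MOD d l]) :
    k = k' := by
  suffices ∀ l, k l = k' l ∧ j ≡ j' [MOD d l] from funext fun l => (this l).1
  intro l
  induction l using WellFoundedLT.induction with
  | _ l ih =>
    have hL : j ≡ j' [MOD (univ.filter (· < l)).lcm d] :=
      Nat.modEq_finset_lcm fun l' hl' => (ih l' (mem_filter.mp hl').2).2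
    exact Nat.eq_and_modEq_of_lt_gcd hL (hkj l) (hkj' l) (hk l) (hk' l)

theorem existsUnique_lt_gcd_lcm_modEq (hd : ∀ l, 0 < d l) :
    ∃! k : Fin m → ℕ, (∀ l, k l < (d l).gcd ((univ.filter (· < l)).lcm d)) ∧
      ∃ j : ℕ, ∀ l, k l ≡ j + a l [MOD d l] := by
  obtain ⟨j, hj⟩ := exists_add_mod_lt_gcd_lcm d a hd
  refine ⟨fun l => (j + a l) % d l, ⟨hj, j, fun l => Nat.mod_modEq _ _⟩, ?_⟩
  rintro k ⟨hk, j', hkj⟩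
  exact eq_of_lt_gcd_lcm_of_modEq d a hk hj hkj fun l => Nat.mod_modEq _ _

end PrefixGcd

theorem stmt_7_general
    (F : Type) [Field F] [Fintype F]
    (m : ℕ)
    (g : Fin m → Polynomial F) (e : Fin m → ℕ)
    (hg0 : ∀ l, (g l).coeff 0 ≠ 0)
    (u : (l : Fin m) → Polynomial F ⧸ Ideal.span {g l ^ e l})
    (d : Fin m → ℕ)
    (hd : ∀ l, d l = Set.ncard {w : Polynomial F ⧸ Ideal.span {g l ^ e l} |
        ∃ k : ℕ, w = Ideal.Quotient.mk (Ideal.span {g l ^ e l}) X ^ k * u l})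
    (K : Fin m → ℕ)
    (hK : ∀ l, K l = Nat.gcd (d l) (Finset.lcm (Finset.filter (fun l' => l' < l) Finset.univ) d)) :
    ∀ v : (l : Fin m) → Polynomial F ⧸ Ideal.span {g l ^ e l},
      (∀ l, ∃ k : ℕ, v l = Ideal.Quotient.mk (Ideal.span {g l ^ e l}) X ^ k * u l) →
      ∃! kk : Fin m → ℕ,
        (∀ l, kk l < K l) ∧
        ∃ j : ℕ, ∀ l,
          Ideal.Quotient.mk (Ideal.span {g l ^ e l}) X ^ (kk l) * u l
            = Ideal.Quotient.mk (Ideal.span {g l ^ e l}) X ^ j * v l := by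
  intro v hv
  choose a ha using hv
  have hfin (l : Fin m) : Finite (Polynomial F ⧸ Ideal.span {g l ^ e l}) :=
    finite_quotient_span_singleton (pow_ne_zero _ fun h => hg0 l (by rw [h, coeff_zero]))
  have hX (l : Fin m) : IsUnit (Ideal.Quotient.mk (Ideal.span {g l ^ e l}) X) :=
    Ideal.Quotient.isUnit_mk_of_isCoprime ((isCoprime_X_of_coeff_zero_ne_zero (hg0 l)).pow_right)
  have hperiod (l : Fin m) : d l = Function.minimalPeriod (Ideal.Quotient.mk _ X * ·) (u l) :=
    (hd l).trans ((hX l).ncard_setOf_pow_mul (u l))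
  have hcond (l : Fin m) (k j : ℕ) :
      Ideal.Quotient.mk (Ideal.span {g l ^ e l}) X ^ k * u l
        = Ideal.Quotient.mk (Ideal.span {g l ^ e l}) X ^ j * v l ↔ k ≡ j + a l [MOD d l] := by
    rw [ha l, ← mul_assoc, ← pow_add, hperiod l]
    exact (hX l).pow_mul_eq_pow_mul_iff_modEq (u l)
  have hdpos (l : Fin m) : 0 < d l := by
    rw [hperiod l]
    exact Function.minimalPeriod_pos_of_mem_periodicPts
      ((hX l).mul_right_injective.mem_periodicPts (u l))
  simpa only [hK, hcond] using existsUnique_lt_gcd_lcm_modEq d a hdpos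

/-- Chinese-remainder decomposition of `x`-orbits. Let `g = Π g_l^{e_l}` with
distinct monic irreducible factors `g_l` and `R_l = 𝔽_q[x]/(g_l^{e_l})`.
If `𝔠_l` is the `x`-orbit in `R_l` of `u_l`, with cardinality `d_l`, and
`K_l = gcd(d_l, lcm(d_1,…,d_{l-1}))` (`K_1 = 1`, since the lcm of the empty
family is `1`), then every orbit of the diagonal `x`-action contained in
`𝔠_1 × ⋯ × 𝔠_m` contains exactly one tuple `(x^{k_1}·u_1, …, x^{k_m}·u_m)`
with `0 ≤ k_l < K_l`; in particular those tuples lie in pairwise distinct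
diagonal orbits. -/
theorem stmt_7
    (p δ : ℕ) (hp : p.Prime) (hδ : 1 ≤ δ)
    (F : Type) [Field F] [Fintype F] (hcard : Fintype.card F = p ^ δ)
    (m : ℕ) (hm : 1 ≤ m)
    (g : Fin m → Polynomial F) (e : Fin m → ℕ)
    (hmonic : ∀ l, (g l).Monic) (hirr : ∀ l, Irreducible (g l))
    (hg0 : ∀ l, (g l).coeff 0 ≠ 0) (he : ∀ l, 1 ≤ e l)
    (hdistinct : ∀ l l', l ≠ l' → g l ≠ g l')
    (u : (l : Fin m) → Polynomial F ⧸ Ideal.span {g l ^ e l})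
    (d : Fin m → ℕ)
    (hd : ∀ l, d l = Set.ncard {w : Polynomial F ⧸ Ideal.span {g l ^ e l} |
        ∃ k : ℕ, w = Ideal.Quotient.mk (Ideal.span {g l ^ e l}) X ^ k * u l})
    (K : Fin m → ℕ)
    (hK : ∀ l, K l = Nat.gcd (d l) (Finset.lcm (Finset.filter (fun l' => l' < l) Finset.univ) d)) :
    ∀ v : (l : Fin m) → Polynomial F ⧸ Ideal.span {g l ^ e l},
      (∀ l, ∃ k : ℕ, v l = Ideal.Quotient.mk (Ideal.span {g l ^ e l}) X ^ k * u l) →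
      ∃! kk : Fin m → ℕ,
        (∀ l, kk l < K l) ∧
        ∃ j : ℕ, ∀ l,
          Ideal.Quotient.mk (Ideal.span {g l ^ e l}) X ^ (kk l) * u l
            = Ideal.Quotient.mk (Ideal.span {g l ^ e l}) X ^ j * v l :=
  stmt_7_general F m g e hg0 u d hd K hK
end

section
/- Let g(x) ∈ 𝔽_q[x] be monic irreducible of degree r with g(0) ≠ 0, let t ≥ 1, and let u be a nonzero element of R_{g^t} = 𝔽_q[x]/(g(x)^t) with minimal-degree representative u(x). Set s = max{i ∈ ℕ : g(x)^i divides u(x)} and ū(x) = u(x)/g(x)^s. Then for every nonzero u' ∈ R_{g^t} with minimal-degree representative u'(x), u' lies in the x-orbit of u in R_{g^t} if and only if both (i) max{i ∈ ℕ : g(x)^i divides u'(x)} = s, and (ii) the class of u'(x)/g(x)^s in 𝔽_q[x]/(g(x)^{t−s}) lies in the x-orbit of the class of ū(x) in 𝔽_q[x]/(g(x)^{t−s}). -/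
/-!
Since `x` is coprime to `g`, multiplying by `x ^ k`, even modulo `g ^ t`, does not change which
powers `g ^ m` with `m ≤ t` divide an element; so `u` and `x ^ k u` have the same `g`-adic
valuation `s`. Writing both as `g ^ s` times a cofactor and cancelling `g ^ s` turns
`g ^ t ∣ u' - x ^ k u` into `g ^ (t - s) ∣ ū' - x ^ k ū`. The bound `s < t` comes from
`deg u < deg g ^ t`.
-/

open Polynomial

section CoprimeOrbit

variable {R : Type*} [CommRing R]

theorem Ideal.Quotient.mk_span_singleton_eq_pow_mul_iff (g a x y : R) (k : ℕ) :
    Ideal.Quotient.mk (Ideal.span {g}) x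
        = Ideal.Quotient.mk (Ideal.span {g}) a ^ k * Ideal.Quotient.mk (Ideal.span {g}) y
      ↔ g ∣ x - a ^ k * y := by
  rw [← map_pow, ← map_mul, Ideal.Quotient.mk_eq_mk_iff_sub_mem, Ideal.mem_span_singleton]

theorem pow_dvd_iff_of_pow_dvd_sub_pow_mul {g a x y : R} {m t k : ℕ} (hga : IsCoprime g a)
    (hmt : m ≤ t) (h : g ^ t ∣ x - a ^ k * y) : g ^ m ∣ x ↔ g ^ m ∣ y := by
  have hm : g ^ m ∣ x - a ^ k * y := (pow_dvd_pow g hmt).trans h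
  rw [← dvd_sub_left hm, sub_sub_cancel]
  exact ⟨hga.pow.dvd_of_dvd_mul_left, (Dvd.dvd.mul_left · _)⟩

theorem pow_dvd_pow_mul_sub_iff [IsDomain R] {g x y c : R} {s t : ℕ} (hg : g ≠ 0) (hst : s ≤ t) :
    g ^ t ∣ g ^ s * x - c * (g ^ s * y) ↔ g ^ (t - s) ∣ x - c * y := by
  rw [show g ^ s * x - c * (g ^ s * y) = g ^ s * (x - c * y) by ring,
    ← Nat.add_sub_cancel' hst, pow_add, Nat.add_sub_cancel_left,
    mul_dvd_mul_iff_left (pow_ne_zero s hg)]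

theorem exists_mk_eq_pow_mul_mk_iff [IsDomain R] {g a u ub u' : R} {s t : ℕ} (hg : g ≠ 0)
    (hga : IsCoprime g a) (hst : s < t) (hub : u = g ^ s * ub) (hsu : ¬ g ^ (s + 1) ∣ u) :
    (∃ k : ℕ, Ideal.Quotient.mk (Ideal.span {g ^ t}) u'
        = Ideal.Quotient.mk (Ideal.span {g ^ t}) a ^ k * Ideal.Quotient.mk (Ideal.span {g ^ t}) u)
    ↔ ((g ^ s ∣ u' ∧ ¬ g ^ (s + 1) ∣ u') ∧
        ∃ ub' : R, u' = g ^ s * ub' ∧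
          ∃ k : ℕ, Ideal.Quotient.mk (Ideal.span {g ^ (t - s)}) ub'
            = Ideal.Quotient.mk (Ideal.span {g ^ (t - s)}) a ^ k
              * Ideal.Quotient.mk (Ideal.span {g ^ (t - s)}) ub) := by
  simp only [Ideal.Quotient.mk_span_singleton_eq_pow_mul_iff]
  constructor
  · rintro ⟨k, hk⟩
    obtain ⟨ub', rfl⟩ : g ^ s ∣ u' :=
      (pow_dvd_iff_of_pow_dvd_sub_pow_mul hga hst.le hk).2 ⟨ub, hub⟩
    refine ⟨⟨dvd_mul_right _ _, ?_⟩, ub', rfl, k, ?_⟩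
    · rwa [pow_dvd_iff_of_pow_dvd_sub_pow_mul hga hst hk]
    · rwa [hub, pow_dvd_pow_mul_sub_iff hg hst.le] at hk
  · rintro ⟨-, ub', rfl, k, hk⟩
    exact ⟨k, by rwa [hub, pow_dvd_pow_mul_sub_iff hg hst.le]⟩

end CoprimeOrbit

theorem Polynomial.isCoprime_X_of_irreducible_of_coeff_zero_ne_zero {K : Type*} [Field K]
    {g : K[X]} (hirr : Irreducible g) (hg0 : g.coeff 0 ≠ 0) : IsCoprime g X :=
  hirr.coprime_iff_not_dvd.2 fun h => hg0 (X_dvd_iff.1 (hirr.dvd_symm irreducible_X h))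

theorem Polynomial.lt_of_pow_dvd_of_degree_lt {R : Type*} [CommRing R] [IsDomain R] {g u : R[X]}
    {s t : ℕ} (hg : 0 < g.natDegree) (hdvd : g ^ s ∣ u) (hu : u ≠ 0)
    (hlt : u.degree < (g ^ t).degree) :
    s < t := by
  have hle := natDegree_le_of_dvd hdvd hu
  have hlt' := natDegree_lt_natDegree hu hlt
  rw [natDegree_pow] at hle hlt'
  exact lt_of_mul_lt_mul_right (hle.trans_lt hlt') hg.le

theorem stmt_9_general
    (F : Type) [Field F]
    (t : ℕ) (g : Polynomial F)
    (hirr : Irreducible g)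
    (hg0 : g.coeff 0 ≠ 0)
    (u : Polynomial F) (hu : u ≠ 0) (hudeg : u.degree < (g ^ t).degree)
    (s : ℕ) (hs : g ^ s ∣ u ∧ ¬ g ^ (s + 1) ∣ u)
    (ub : Polynomial F) (hub : u = g ^ s * ub)
    (u' : Polynomial F) :
    (∃ k : ℕ, Ideal.Quotient.mk (Ideal.span {g ^ t}) u'
        = Ideal.Quotient.mk (Ideal.span {g ^ t}) X ^ k
          * Ideal.Quotient.mk (Ideal.span {g ^ t}) u)
    ↔ ((g ^ s ∣ u' ∧ ¬ g ^ (s + 1) ∣ u') ∧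
        ∃ ub' : Polynomial F, u' = g ^ s * ub' ∧
          ∃ k : ℕ, Ideal.Quotient.mk (Ideal.span {g ^ (t - s)}) ub'
            = Ideal.Quotient.mk (Ideal.span {g ^ (t - s)}) X ^ k
              * Ideal.Quotient.mk (Ideal.span {g ^ (t - s)}) ub) :=
  exists_mk_eq_pow_mul_mk_iff hirr.ne_zero
    (isCoprime_X_of_irreducible_of_coeff_zero_ne_zero hirr hg0)
    (lt_of_pow_dvd_of_degree_lt hirr.natDegree_pos hs.1 hu hudeg) hub hs.2

/-- Let `u` be a nonzero element of `R_{g^t} = 𝔽_q[x]/(g^t)` with minimal-degree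
representative `u(x)`, `s = max{i : g^i ∣ u(x)}` and `ū(x) = u(x)/g(x)^s`.
A nonzero `u'` (with minimal-degree representative `u'(x)`) lies in the
`x`-orbit of `u` iff (i) `max{i : g^i ∣ u'(x)} = s` and (ii) the class of
`u'(x)/g(x)^s` lies in the `x`-orbit of the class of `ū(x)` in
`𝔽_q[x]/(g^{t-s})`. -/
theorem stmt_9
    (p δ : ℕ) (hp : p.Prime) (hδ : 1 ≤ δ)
    (F : Type) [Field F] [Fintype F] (hcard : Fintype.card F = p ^ δ)
    (r t : ℕ) (g : Polynomial F)
    (hmonic : g.Monic) (hirr : Irreducible g) (hdeg : g.natDegree = r)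
    (hg0 : g.coeff 0 ≠ 0) (ht : 1 ≤ t)
    (u : Polynomial F) (hu : u ≠ 0) (hudeg : u.degree < (g ^ t).degree)
    (s : ℕ) (hs : g ^ s ∣ u ∧ ¬ g ^ (s + 1) ∣ u)
    (ub : Polynomial F) (hub : u = g ^ s * ub)
    (u' : Polynomial F) (hu' : u' ≠ 0) (hu'deg : u'.degree < (g ^ t).degree) :
    (∃ k : ℕ, Ideal.Quotient.mk (Ideal.span {g ^ t}) u'
        = Ideal.Quotient.mk (Ideal.span {g ^ t}) X ^ k
          * Ideal.Quotient.mk (Ideal.span {g ^ t}) u)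
    ↔ ((g ^ s ∣ u' ∧ ¬ g ^ (s + 1) ∣ u') ∧
        ∃ ub' : Polynomial F, u' = g ^ s * ub' ∧
          ∃ k : ℕ, Ideal.Quotient.mk (Ideal.span {g ^ (t - s)}) ub'
            = Ideal.Quotient.mk (Ideal.span {g ^ (t - s)}) X ^ k
              * Ideal.Quotient.mk (Ideal.span {g ^ (t - s)}) ub) :=
  stmt_9_general F t g hirr hg0 u hu hudeg s hs ub hub u'
end

section
/- Let g(x) ∈ 𝔽_q[x] be monic irreducible of degree r with g(0) ≠ 0, let α ∈ 𝔽_q satisfy 𝔽_q = 𝔽_p(α), and let h ≥ 1. For any polynomial f(x) = 1 + f_h(x)·g(x)^h + m(x)·g(x)^{h+1} ∈ 𝔽_q[x] with deg f_h(x) < r, there exist integers c_{(i,j)} ∈ {0, 1, …, p−1} for 0 ≤ i < δ and 0 ≤ j < r such that Π_{i,j} (1 + α^i x^j g(x)^h)^{c_{(i,j)}} ≡ f(x) (mod g(x)^{h+1}). -/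
/-!
Modulo `g^(h+1)` the element `u = g^h` squares to zero, so `a ↦ 1 + a u` turns sums into
products: `∏ (1 + aₜ u)^nₜ ≡ 1 + (∑ nₜ aₜ) u`. Writing each coefficient of `f_h` in the
`𝔽_p`-spanning family `αⁱ` expresses `f_h` as `∑ c_{ij} αⁱ xʲ` with `c_{ij} < p`, and then
`∏ (1 + αⁱ xʲ g^h)^{c_{ij}} ≡ 1 + f_h g^h ≡ f`.
-/

open Polynomial

section SquareZero

variable {R : Type*} [CommRing R] {u : R}

theorem one_add_mul_mul_one_add_mul_of_mul_self_eq_zero (hu : u * u = 0) (a b : R) :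
    (1 + a * u) * (1 + b * u) = 1 + (a + b) * u := by
  linear_combination a * b * hu

theorem one_add_mul_pow_of_mul_self_eq_zero (hu : u * u = 0) (a : R) (n : ℕ) :
    (1 + a * u) ^ n = 1 + n * a * u := by
  induction n with
  | zero => simp
  | succ n ih =>
    rw [pow_succ, ih, one_add_mul_mul_one_add_mul_of_mul_self_eq_zero hu]
    push_cast
    ring

theorem prod_one_add_mul_pow_of_mul_self_eq_zero (hu : u * u = 0) {ι : Type*} (s : Finset ι)
    (a : ι → R) (n : ι → ℕ) :
    ∏ t ∈ s, (1 + a t * u) ^ n t = 1 + (∑ t ∈ s, n t * a t) * u := by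
  classical
  induction s using Finset.induction with
  | empty => simp
  | insert t s ht ih =>
    rw [Finset.prod_insert ht, ih, one_add_mul_pow_of_mul_self_eq_zero hu,
      one_add_mul_mul_one_add_mul_of_mul_self_eq_zero hu, Finset.sum_insert ht]

end SquareZero

theorem sq_dvd_prod_one_add_mul_pow_sub {R : Type*} [CommRing R] (u : R) {ι : Type*}
    (s : Finset ι) (a : ι → R) (n : ι → ℕ) :
    u ^ 2 ∣ ∏ t ∈ s, (1 + a t * u) ^ n t - (1 + (∑ t ∈ s, n t * a t) * u) := by
  let π := Ideal.Quotient.mk (Ideal.span {u ^ 2})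
  have hu : π u * π u = 0 := by
    rw [← map_mul, ← sq, Ideal.Quotient.eq_zero_iff_mem]
    exact Ideal.mem_span_singleton_self _
  rw [← Ideal.mem_span_singleton, ← Ideal.Quotient.eq]
  simpa [π, map_prod, map_sum] using
    prod_one_add_mul_pow_of_mul_self_eq_zero hu s (fun t => π (a t)) n

theorem Polynomial.eq_sum_natCast_mul_C_pow_mul_X_pow {K : Type*} [CommRing K] {α : K}
    {δ r : ℕ} {c : K → Fin δ → ℕ} (hc : ∀ y, y = ∑ i, (c y i : K) * α ^ (i : ℕ))
    {f : K[X]} (hf : f.degree < r) :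
    f = ∑ x : Fin δ × Fin r,
      (c (f.coeff x.2) x.1 : K[X]) * (C (α ^ (x.1 : ℕ)) * X ^ (x.2 : ℕ)) := by
  conv_lhs => rw [← sum_C_mul_X_pow_eq f, ← sum_fin (fun i a => C a * X ^ i) (by simp) hf]
  rw [Fintype.sum_prod_type_right]
  refine Finset.sum_congr rfl fun j _ => ?_
  conv_lhs => rw [hc (f.coeff j)]
  simp [map_sum, Finset.sum_mul, mul_assoc]

theorem stmt_14_general
    (p δ : ℕ) (hp : p.Prime)
    (F : Type) [Field F] [CharP F p]
    (α : F) (hα : ∀ y : F, ∃ c : Fin δ → ℕ, y = ∑ i, (c i : F) * α ^ (i : ℕ))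
    (r : ℕ) (g : Polynomial F)
    (h : ℕ) (hh : 1 ≤ h)
    (f fh m : Polynomial F) (hfh : fh.degree < (r : WithBot ℕ))
    (hf : f = 1 + fh * g ^ h + m * g ^ (h + 1)) :
    ∃ c : Fin δ → Fin r → ℕ, (∀ i j, c i j < p) ∧
      g ^ (h + 1) ∣
        (∏ i : Fin δ, ∏ j : Fin r,
          (1 + Polynomial.C (α ^ (i : ℕ)) * X ^ (j : ℕ) * g ^ h) ^ (c i j)) - f := by
  choose c hc using hα
  have hc_mod : ∀ y, y = ∑ i, ((c y i % p : ℕ) : F) * α ^ (i : ℕ) := fun y => by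
    simpa only [← CharP.cast_eq_mod] using hc y
  refine ⟨fun i j => c (fh.coeff j) i % p, fun i j => Nat.mod_lt _ hp.pos, ?_⟩
  have hprod := sq_dvd_prod_one_add_mul_pow_sub (g ^ h) Finset.univ
    (fun x : Fin δ × Fin r => C (α ^ (x.1 : ℕ)) * X ^ (x.2 : ℕ))
    (fun x => c (fh.coeff x.2) x.1 % p)
  rw [← eq_sum_natCast_mul_C_pow_mul_X_pow hc_mod hfh, Fintype.prod_prod_type] at hprod
  have hsq : g ^ (h + 1) ∣ (g ^ h) ^ 2 := by
    rw [← pow_mul]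
    exact pow_dvd_pow g (by omega)
  rw [hf, show ∀ P : F[X], P - (1 + fh * g ^ h + m * g ^ (h + 1)) =
      P - (1 + fh * g ^ h) - m * g ^ (h + 1) from fun P => by ring]
  exact dvd_sub (hsq.trans hprod) (dvd_mul_left _ _)

/-- For any polynomial `f(x) = 1 + f_h(x)g(x)^h + m(x)g(x)^{h+1}` with
`deg f_h < r`, there exist exponents `c_{(i,j)} ∈ {0,…,p-1}` such that
`Π_{i,j} (1 + α^i x^j g(x)^h)^{c_{(i,j)}} ≡ f(x) (mod g(x)^{h+1})`. -/
theorem stmt_14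
    (p δ : ℕ) (hp : p.Prime) (hδ : 1 ≤ δ)
    (F : Type) [Field F] [Fintype F] [CharP F p] (hcard : Fintype.card F = p ^ δ)
    (α : F) (hα : ∀ y : F, ∃ c : Fin δ → ℕ, y = ∑ i, (c i : F) * α ^ (i : ℕ))
    (r : ℕ) (g : Polynomial F)
    (hmonic : g.Monic) (hirr : Irreducible g) (hdeg : g.natDegree = r)
    (hg0 : g.coeff 0 ≠ 0)
    (h : ℕ) (hh : 1 ≤ h)
    (f fh m : Polynomial F) (hfh : fh.degree < (r : WithBot ℕ))
    (hf : f = 1 + fh * g ^ h + m * g ^ (h + 1)) :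
    ∃ c : Fin δ → Fin r → ℕ, (∀ i j, c i j < p) ∧
      g ^ (h + 1) ∣
        (∏ i : Fin δ, ∏ j : Fin r,
          (1 + Polynomial.C (α ^ (i : ℕ)) * X ^ (j : ℕ) * g ^ h) ^ (c i j)) - f :=
  stmt_14_general p δ hp F α hα r g h hh f fh m hfh hf
end

section
/- Let g(x) ∈ 𝔽_q[x] be monic irreducible of degree r with g(0) ≠ 0, let l ≥ 2, let α ∈ 𝔽_q satisfy 𝔽_q = 𝔽_p(α), and set a_{i,j,k}(x) = 1 + α^i x^j g(x)^k for 0 ≤ i < δ, 0 ≤ j < r, 1 ≤ k < l with p ∤ k. Then for any natural-number exponents c_{(ijk)}, one has Π_{i,j,k} a_{i,j,k}(x)^{c_{(ijk)}} ≡ 1 (mod g(x)^l) if and only if, for every triple (i,j,k), c_{(ijk)} ≡ 0 (mod ord(a_{i,j,k})), where ord(a_{i,j,k}) is the multiplicative order of the class of a_{i,j,k}(x) in the unit group of 𝔽_q[x]/(g(x)^l). -/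
/-!
Every `a_{ijk}` is a principal unit, i.e. lies in `U = {u ≡ 1 mod g}` inside `𝔽_q[x]/(g^l)`,
and `|U| = q^{r(l-1)}`. In characteristic `p`, `(1 + t g^k)^{p^s} = 1 + t^{p^s} g^{k p^s}`, so the
order of `a_{ijk}` divides `p^{m(k)}` with `m(k)` the least `s` such that `l ≤ k p^s`; since every
`1 ≤ n < l` is `k p^s` with `p ∤ k` in exactly one way, `∏ ord(a_{ijk}) ≤ q^{r(l-1)}`.
On the other hand the `a_{ijk}` generate `U`: for `n = k p^s < l`, the powers
`a_{ijk}^{p^s} = 1 + (α^i x^j)^{p^s} g^n` produce every `1 + h g^n` modulo `g^{n+1}`, because the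
`α^i x^j` span `𝔽_q[x]/(g)` additively and Frobenius is bijective on this finite field;
descending induction on `n` then reaches all of `U`. So `(c_v) ↦ ∏ a_v^{c_v}` maps
`∏ ℤ/ord(a_v)` onto a set of at least as many elements, hence injectively.
-/

open Polynomial

/-- The index set of triples `(i, j, k)` with `0 ≤ i < δ`, `0 ≤ j < r`,
`1 ≤ k < l` and `p ∤ k`. -/
abbrev Triples (p δ r l : ℕ) : Type :=
  {v : Fin δ × Fin r × Fin l // 0 < (v.2.2 : ℕ) ∧ ¬ p ∣ (v.2.2 : ℕ)}

open Finset

theorem eq_and_eq_of_mul_pow_eq_mul_pow {p k k' s s' : ℕ} (hp : p.Prime) (hk : ¬ p ∣ k)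
    (hk' : ¬ p ∣ k') (h : k * p ^ s = k' * p ^ s') : k = k' ∧ s = s' := by
  have : Fact p.Prime := ⟨hp⟩
  have hval : ∀ k s : ℕ, ¬ p ∣ k → padicValNat p (k * p ^ s) = s := fun k s hk => by
    rw [padicValNat.mul (by rintro rfl; exact hk (dvd_zero p)) (pow_ne_zero s hp.ne_zero),
      padicValNat.eq_zero_of_not_dvd hk, padicValNat.prime_pow, zero_add]
  have hs : s = s' := by rw [← hval k s hk, h, hval k' s' hk']
  subst hs
  exact ⟨Nat.eq_of_mul_eq_mul_right (pow_pos hp.pos s) h, rfl⟩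

noncomputable def leastExp (p l k : ℕ) : ℕ := sInf {s | l ≤ k * p ^ s}

theorem le_mul_pow_leastExp {p l k : ℕ} (hp : 2 ≤ p) (hk : 0 < k) :
    l ≤ k * p ^ leastExp p l k :=
  Nat.sInf_mem (s := {s | l ≤ k * p ^ s})
    ⟨l, (Nat.lt_pow_self hp).le.trans (Nat.le_mul_of_pos_left _ hk)⟩

theorem mul_pow_lt_of_lt_leastExp {p l k s : ℕ} (hs : s < leastExp p l k) : k * p ^ s < l :=
  not_le.mp (Nat.notMem_of_lt_sInf (s := {s | l ≤ k * p ^ s}) hs)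

theorem sum_leastExp_le {p : ℕ} (hp : p.Prime) (δ r l : ℕ) :
    ∑ v : Triples p δ r l, leastExp p l v.1.2.2 ≤ δ * r * (l - 1) := by
  let f : (Σ _ : Triples p δ r l, ℕ) → Fin δ × Fin r × ℕ :=
    fun x => (x.1.1.1, x.1.1.2.1, x.1.1.2.2 * p ^ x.2)
  calc ∑ v : Triples p δ r l, leastExp p l v.1.2.2
      = #(univ.sigma fun v : Triples p δ r l => range (leastExp p l v.1.2.2)) := by
        simp
    _ ≤ #(univ ×ˢ univ ×ˢ Ico 1 l : Finset (Fin δ × Fin r × ℕ)) := by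
        refine card_le_card_of_injOn f (fun x hx => ?_) (fun x hx y hy hxy => ?_)
        · simp only [mem_coe, mem_sigma, mem_range, mem_univ, true_and] at hx
          simp only [f, coe_product, Set.mem_prod, mem_coe, mem_univ, coe_Ico, Set.mem_Ico,
            true_and]
          exact ⟨Nat.mul_pos x.1.2.1 (pow_pos hp.pos _), mul_pow_lt_of_lt_leastExp hx⟩
        · obtain ⟨⟨⟨i, j, k⟩, hk⟩, s⟩ := x
          obtain ⟨⟨⟨i', j', k'⟩, hk'⟩, s'⟩ := y
          simp only [f, Prod.mk.injEq] at hxy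
          obtain ⟨rfl, rfl, hks⟩ := hxy
          obtain ⟨hkk, rfl⟩ := eq_and_eq_of_mul_pow_eq_mul_pow hp hk.2 hk'.2 hks
          obtain rfl : k = k' := Fin.ext hkk
          rfl
    _ = δ * r * (l - 1) := by simp [mul_assoc]

section PrincipalUnits

variable {R : Type*} [CommRing R]

theorem one_add_mul_pow_pow_char_pow (p : ℕ) [ExpChar R p] (t u : R) (k s : ℕ) :
    (1 + t * u ^ k) ^ p ^ s = 1 + t ^ p ^ s * u ^ (k * p ^ s) := by
  rw [add_pow_expChar_pow, one_pow, mul_pow, ← pow_mul]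

theorem exists_one_add_pow_mul_add_mem_of_mem_closure (M : Submonoid R) (G : R) {n : ℕ}
    (hn : 1 ≤ n) {S : Set R} (hS : ∀ x ∈ S, 1 + G ^ n * x ∈ M) {x : R}
    (hx : x ∈ AddSubmonoid.closure S) : ∃ z, 1 + G ^ n * x + G ^ (n + 1) * z ∈ M := by
  induction hx using AddSubmonoid.closure_induction with
  | mem x hx => exact ⟨0, by simpa using hS x hx⟩
  | zero => exact ⟨0, by simp [M.one_mem]⟩
  | add x y _ _ hx hy =>
    obtain ⟨z, hz⟩ := hx
    obtain ⟨z', hz'⟩ := hy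
    obtain ⟨m, rfl⟩ := Nat.exists_eq_add_of_le' hn
    refine ⟨z + z' + G ^ m * (x + G * z) * (y + G * z'), ?_⟩
    convert M.mul_mem hz hz' using 1
    ring

/- Descending induction on `n`, trivial from `n = l` on. If `A = 1 + G^n y + G^(n+1) z ∈ M`, then
`A` is a unit (`G` is nilpotent) and `1 + G^n y = A * (1 - G^(n+1) A⁻¹ z)`. -/
theorem one_add_pow_mul_mem_of_forall_exists (M : Submonoid R) {G : R} {l : ℕ}
    (hG : G ^ l = 0)
    (happrox : ∀ n, 1 ≤ n → n < l → ∀ y, ∃ z, 1 + G ^ n * y + G ^ (n + 1) * z ∈ M) {n : ℕ}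
    (hn : 1 ≤ n) (y : R) : 1 + G ^ n * y ∈ M := by
  rcases le_or_gt l n with hln | hnl
  · simp [pow_eq_zero_of_le hln hG, M.one_mem]
  revert y
  refine Nat.decreasingInduction' (fun k hkl hnk ih y => ?_) hnl.le
    (fun y => by simp [hG, M.one_mem])
  obtain ⟨z, hz⟩ := happrox k (hn.trans hnk) hkl y
  obtain ⟨m, rfl⟩ := Nat.exists_eq_add_of_le' (hn.trans hnk)
  have hA : IsUnit (1 + G ^ (m + 1) * y + G ^ (m + 1 + 1) * z) := by
    have hnil : IsNilpotent (G * (G ^ m * y + G ^ (m + 1) * z)) :=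
      (Commute.all _ _).isNilpotent_mul_right ⟨l, hG⟩
    convert hnil.isUnit_one_add using 1
    ring
  have key : 1 + G ^ (m + 1) * y = (1 + G ^ (m + 1) * y + G ^ (m + 1 + 1) * z) *
      (1 + G ^ (m + 1 + 1) * (-(hA.unit⁻¹ : Rˣ) * z)) := by
    linear_combination (G ^ (m + 1 + 1) * z) * hA.mul_val_inv
  rw [key]
  exact M.mul_mem hz (ih _)

theorem mk_one_add_mul_pow_pow_leastExp_eq_one {p : ℕ} [ExpChar R p]
    (hp : 2 ≤ p) (t g : R) {k : ℕ} (hk : 0 < k) (l : ℕ) :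
    Ideal.Quotient.mk (Ideal.span {g ^ l}) (1 + t * g ^ k) ^ p ^ leastExp p l k = 1 := by
  rw [← map_pow, one_add_mul_pow_pow_char_pow, map_add, map_one, add_eq_left,
    Ideal.Quotient.eq_zero_iff_mem, Ideal.mem_span_singleton]
  exact dvd_mul_of_dvd_right (pow_dvd_pow g (le_mul_pow_leastExp hp hk)) _

end PrincipalUnits

theorem prod_pow_eq_one_iff_of_prod_orderOf_le {M ι : Type*} [CommMonoid M] [Fintype ι]
    (b : ι → M) (hb : ∀ i, IsOfFinOrder (b i))
    (hcard : ∏ i, orderOf (b i) ≤ Nat.card (Submonoid.closure (Set.range b))) (c : ι → ℕ) :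
    ∏ i, b i ^ c i = 1 ↔ ∀ i, orderOf (b i) ∣ c i := by
  refine ⟨fun h i => ?_,
    fun h => Fintype.prod_eq_one _ fun i => orderOf_dvd_iff_pow_eq_one.mp (h i)⟩
  let Φ : (∀ i, Fin (orderOf (b i))) → Submonoid.closure (Set.range b) := fun x =>
    ⟨∏ i, b i ^ (x i : ℕ), Submonoid.mem_closure_range_iff_of_fintype.mpr ⟨_, rfl⟩⟩
  let reduce (c : ι → ℕ) : ∀ i, Fin (orderOf (b i)) :=
    fun i => ⟨c i % orderOf (b i), Nat.mod_lt _ (hb i).orderOf_pos⟩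
  have hΦ (c : ι → ℕ) : (Φ (reduce c) : M) = ∏ i, b i ^ c i :=
    Fintype.prod_congr _ _ fun i => pow_mod_orderOf (b i) (c i)
  have hsurj : Function.Surjective Φ := by
    rintro ⟨w, hw⟩
    obtain ⟨c, rfl⟩ := Submonoid.mem_closure_range_iff_of_fintype.mp hw
    exact ⟨reduce c, Subtype.ext (hΦ c)⟩
  have hinj : Function.Injective Φ :=
    (hsurj.bijective_of_nat_card_le (by simpa [Nat.card_pi] using hcard)).injective
  have := congrFun (@hinj (reduce c) (reduce 0) (Subtype.ext (by rw [hΦ, hΦ, h]; simp))) i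
  exact Nat.dvd_of_mod_eq_zero (by simpa [reduce] using this)

section Polynomial

variable {F : Type*} [Field F] {δ : ℕ} {α : F}

theorem injective_mk_one_add_mul_degreeLT {g : F[X]} (hg : g ≠ 0) (l : ℕ) :
    Function.Injective fun u : degreeLT F (g.natDegree * (l - 1)) =>
      Ideal.Quotient.mk (Ideal.span {g ^ l}) (1 + g * u) := by
  rintro ⟨u, hu⟩ ⟨v, hv⟩ huv
  simp only [Ideal.Quotient.eq, Ideal.mem_span_singleton, add_sub_add_left_eq_sub,
    ← mul_sub] at huv
  rw [Subtype.mk.injEq, ← sub_eq_zero]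
  have hdvd : g ^ (l - 1) ∣ u - v := by
    rcases l with _ | m
    · simp
    · simpa [pow_succ', mul_dvd_mul_iff_left hg] using huv
  refine eq_zero_of_dvd_of_degree_lt hdvd ?_
  rw [degree_pow, degree_eq_natDegree hg, nsmul_eq_mul, mul_comm]
  exact_mod_cast mem_degreeLT.mp ((degreeLT F _).sub_mem hu hv)

theorem Polynomial.card_degreeLT (n : ℕ) : Nat.card (degreeLT F n) = Nat.card F ^ n := by
  rw [Nat.card_congr (degreeLTEquiv F n).toEquiv, Nat.card_fun, Nat.card_fin]

theorem AdjoinRoot.finite [Finite F] {g : F[X]} (hg : g ≠ 0) : Finite (AdjoinRoot g) :=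
  have : Module.Finite F (AdjoinRoot g) := (AdjoinRoot.powerBasis hg).finite
  Module.finite_of_finite F

theorem AdjoinRoot.exists_mem_closure_range_C_pow_mul_X_pow_mk_eq
    (hα : ∀ y : F, ∃ c : Fin δ → ℕ, y = ∑ i, (c i : F) * α ^ (i : ℕ)) {g : F[X]} (hg : g ≠ 0)
    (y : AdjoinRoot g) :
    ∃ x ∈ AddSubmonoid.closure (Set.range fun ij : Fin δ × Fin g.natDegree =>
      C (α ^ (ij.1 : ℕ)) * X ^ (ij.2 : ℕ)), AdjoinRoot.mk g x = y := by
  suffices y ∈ (AddSubmonoid.closure _).map (AdjoinRoot.mk g) from AddSubmonoid.mem_map.mp this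
  rw [AddMonoidHom.map_mclosure, ← Set.range_comp]
  let b := (AdjoinRoot.powerBasis hg).basis
  rw [← b.sum_repr y]
  refine sum_mem fun j _ => ?_
  obtain ⟨c, hc⟩ := hα (b.repr y j)
  rw [hc, sum_smul]
  refine sum_mem fun i _ => ?_
  have : ((c i : F) * α ^ (i : ℕ)) • b j =
      c i • AdjoinRoot.mk g (C (α ^ (i : ℕ)) * X ^ (j : ℕ)) := by
    rw [mul_smul, Nat.cast_smul_eq_nsmul]
    simp [b, Algebra.smul_def, AdjoinRoot.algebraMap_eq]
  rw [this]
  exact nsmul_mem (AddSubmonoid.subset_closure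
    (Set.mem_range_self ((i, j) : Fin δ × Fin g.natDegree))) _

theorem exists_mem_closure_pow_char_pow_dvd_sub (p : ℕ) [Fact p.Prime] [CharP F p] [Finite F]
    (hα : ∀ y : F, ∃ c : Fin δ → ℕ, y = ∑ i, (c i : F) * α ^ (i : ℕ)) {g : F[X]}
    (hg : Irreducible g) (s : ℕ) (h : F[X]) :
    ∃ x ∈ AddSubmonoid.closure (Set.range fun ij : Fin δ × Fin g.natDegree =>
      (C (α ^ (ij.1 : ℕ)) * X ^ (ij.2 : ℕ)) ^ p ^ s), g ∣ h - x := by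
  have : Fact (Irreducible g) := ⟨hg⟩
  have : Finite (AdjoinRoot g) := AdjoinRoot.finite hg.ne_zero
  have : CharP (AdjoinRoot g) p := charP_of_injective_algebraMap (algebraMap F _).injective p
  obtain ⟨y, hy⟩ := (bijective_iterateFrobenius (AdjoinRoot g) p s).2 (AdjoinRoot.mk g h)
  obtain ⟨x, hx, rfl⟩ :=
    AdjoinRoot.exists_mem_closure_range_C_pow_mul_X_pow_mk_eq hα hg.ne_zero y
  refine ⟨iterateFrobenius F[X] p s x, ?_, ?_⟩
  · have := AddSubmonoid.mem_map_of_mem (iterateFrobenius F[X] p s) hx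
    rwa [AddMonoidHom.map_mclosure, ← Set.range_comp] at this
  · rw [← AdjoinRoot.mk_eq_mk, ← hy]
    simp [iterateFrobenius_def]

theorem mk_one_add_mul_mem_of_forall_mem {p : ℕ} [Fact p.Prime] [CharP F p] [Finite F]
    (hα : ∀ y : F, ∃ c : Fin δ → ℕ, y = ∑ i, (c i : F) * α ^ (i : ℕ)) {g : F[X]}
    (hg : Irreducible g) {l : ℕ} (M : Submonoid (F[X] ⧸ Ideal.span {g ^ l}))
    (hM : ∀ (i : Fin δ) (j : Fin g.natDegree) (k : ℕ), 0 < k → ¬ p ∣ k → k < l →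
      Ideal.Quotient.mk _ (1 + C (α ^ (i : ℕ)) * X ^ (j : ℕ) * g ^ k) ∈ M) (y : F[X]) :
    Ideal.Quotient.mk _ (1 + g * y) ∈ M := by
  set mk := Ideal.Quotient.mk (Ideal.span {g ^ l})
  have hG : mk g ^ l = 0 := by
    rw [← map_pow, Ideal.Quotient.eq_zero_iff_mem]
    exact Ideal.mem_span_singleton_self _
  suffices ∀ n, 1 ≤ n → n < l → ∀ y, ∃ z, 1 + mk g ^ n * y + mk g ^ (n + 1) * z ∈ M by
    simpa using one_add_pow_mul_mem_of_forall_exists M hG this le_rfl (mk y)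
  intro n hn hnl y
  obtain ⟨h, rfl⟩ := Ideal.Quotient.mk_surjective y
  obtain ⟨s, k, hpk, rfl⟩ :=
    Nat.exists_eq_pow_mul_and_not_dvd (Nat.one_le_iff_ne_zero.mp hn) p (Fact.out : p.Prime).ne_one
  have hk : 0 < k := Nat.pos_of_ne_zero (by rintro rfl; simp at hn)
  obtain ⟨x, hx, w, hw⟩ := exists_mem_closure_pow_char_pow_dvd_sub p hα hg s h
  have hmx := AddSubmonoid.mem_map_of_mem mk hx
  rw [AddMonoidHom.map_mclosure, ← Set.range_comp] at hmx
  have hgen : ∀ x ∈ Set.range (mk ∘ fun ij : Fin δ × Fin g.natDegree =>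
      (C (α ^ (ij.1 : ℕ)) * X ^ (ij.2 : ℕ)) ^ p ^ s), 1 + mk g ^ (p ^ s * k) * x ∈ M := by
    rintro _ ⟨⟨i, j⟩, rfl⟩
    have hkl : k < l :=
      (Nat.le_mul_of_pos_left k (pow_pos (Fact.out : p.Prime).pos s)).trans_lt hnl
    have := M.pow_mem (hM i j k hk hpk hkl) (p ^ s)
    rw [← map_pow, one_add_mul_pow_pow_char_pow, mul_comm k] at this
    simpa [mul_comm] using this
  obtain ⟨z, hz⟩ := exists_one_add_pow_mul_add_mem_of_mem_closure M (mk g) hn hgen hmx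
  refine ⟨z - mk w, ?_⟩
  rw [sub_eq_iff_eq_add'.mp hw]
  convert hz using 1
  simp only [map_add, map_mul]
  ring

end Polynomial

theorem stmt_15_general
    (p δ : ℕ) (hp : p.Prime)
    (F : Type) [Field F] [Fintype F] [CharP F p] (hcard : Fintype.card F = p ^ δ)
    (α : F) (hα : ∀ y : F, ∃ c : Fin δ → ℕ, y = ∑ i, (c i : F) * α ^ (i : ℕ))
    (r l : ℕ) (g : Polynomial F)
    (hirr : Irreducible g) (hdeg : g.natDegree = r)
    (c : Triples p δ r l → ℕ) :
    Ideal.Quotient.mk (Ideal.span {g ^ l})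
        (∏ v : Triples p δ r l,
          (1 + Polynomial.C (α ^ (v.1.1 : ℕ)) * X ^ (v.1.2.1 : ℕ)
            * g ^ (v.1.2.2 : ℕ)) ^ (c v)) = 1
    ↔ ∀ v : Triples p δ r l,
        orderOf (Ideal.Quotient.mk (Ideal.span {g ^ l})
          (1 + Polynomial.C (α ^ (v.1.1 : ℕ)) * X ^ (v.1.2.1 : ℕ)
            * g ^ (v.1.2.2 : ℕ))) ∣ c v := by
  have : Fact p.Prime := ⟨hp⟩
  subst hdeg
  set B : Triples p δ g.natDegree l → F[X] ⧸ Ideal.span {g ^ l} := fun v =>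
    Ideal.Quotient.mk _ (1 + C (α ^ (v.1.1 : ℕ)) * X ^ (v.1.2.1 : ℕ) * g ^ (v.1.2.2 : ℕ))
  have hB (v) : B v ^ p ^ leastExp p l v.1.2.2 = 1 :=
    mk_one_add_mul_pow_pow_leastExp_eq_one hp.two_le _ g v.2.1 l
  have hgen (y : F[X]) : Ideal.Quotient.mk _ (1 + g * y) ∈ Submonoid.closure (Set.range B) :=
    mk_one_add_mul_mem_of_forall_mem hα hirr _ (fun i j k hk hpk hkl =>
      Submonoid.subset_closure (Set.mem_range_self
        (⟨(i, j, ⟨k, hkl⟩), hk, hpk⟩ : Triples p δ g.natDegree l))) y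
  have : Finite (F[X] ⧸ Ideal.span {g ^ l}) := AdjoinRoot.finite (pow_ne_zero l hirr.ne_zero)
  have hprod_le : ∏ v, orderOf (B v) ≤ Nat.card (Submonoid.closure (Set.range B)) :=
    calc ∏ v, orderOf (B v) ≤ ∏ v : Triples p δ g.natDegree l, p ^ leastExp p l v.1.2.2 :=
          prod_le_prod' fun v _ =>
            Nat.le_of_dvd (pow_pos hp.pos _) (orderOf_dvd_of_pow_eq_one (hB v))
      _ = p ^ ∑ v : Triples p δ g.natDegree l, leastExp p l v.1.2.2 := prod_pow_eq_pow_sum _ _ _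
      _ ≤ p ^ (δ * g.natDegree * (l - 1)) :=
          Nat.pow_le_pow_right hp.pos (sum_leastExp_le hp _ _ _)
      _ = Nat.card (degreeLT F (g.natDegree * (l - 1))) := by
          rw [Polynomial.card_degreeLT, Nat.card_eq_fintype_card, hcard, ← pow_mul, mul_assoc]
      _ ≤ Nat.card (Submonoid.closure (Set.range B)) :=
          Nat.card_le_card_of_injective (fun u => ⟨_, hgen u⟩) fun u v huv =>
            injective_mk_one_add_mul_degreeLT hirr.ne_zero l (congrArg Subtype.val huv)
  rw [map_prod]
  simp only [map_pow (Ideal.Quotient.mk (Ideal.span {g ^ l}))]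
  exact prod_pow_eq_one_iff_of_prod_orderOf_le B
    (fun v => isOfFinOrder_iff_pow_eq_one.2 ⟨_, pow_pos hp.pos _, hB v⟩) hprod_le c

/-- With `a_{i,j,k}(x) = 1 + α^i x^j g(x)^k` for `0 ≤ i < δ`, `0 ≤ j < r`,
`1 ≤ k < l`, `p ∤ k`, one has `Π a_{i,j,k}(x)^{c_{(ijk)}} ≡ 1 (mod g(x)^l)` iff
`c_{(ijk)} ≡ 0 (mod ord(a_{i,j,k}))` for every triple, where `ord` is the
multiplicative order in the unit group of `𝔽_q[x]/(g(x)^l)`. -/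
theorem stmt_15
    (p δ : ℕ) (hp : p.Prime) (hδ : 1 ≤ δ)
    (F : Type) [Field F] [Fintype F] [CharP F p] (hcard : Fintype.card F = p ^ δ)
    (α : F) (hα : ∀ y : F, ∃ c : Fin δ → ℕ, y = ∑ i, (c i : F) * α ^ (i : ℕ))
    (r l : ℕ) (g : Polynomial F)
    (hmonic : g.Monic) (hirr : Irreducible g) (hdeg : g.natDegree = r)
    (hg0 : g.coeff 0 ≠ 0) (hl : 2 ≤ l)
    (c : Triples p δ r l → ℕ) :
    Ideal.Quotient.mk (Ideal.span {g ^ l})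
        (∏ v : Triples p δ r l,
          (1 + Polynomial.C (α ^ (v.1.1 : ℕ)) * X ^ (v.1.2.1 : ℕ)
            * g ^ (v.1.2.2 : ℕ)) ^ (c v)) = 1
    ↔ ∀ v : Triples p δ r l,
        orderOf (Ideal.Quotient.mk (Ideal.span {g ^ l})
          (1 + Polynomial.C (α ^ (v.1.1 : ℕ)) * X ^ (v.1.2.1 : ℕ)
            * g ^ (v.1.2.2 : ℕ))) ∣ c v :=
  stmt_15_general p δ hp F hcard α hα r l g hirr hdeg c
end

section
/- Let g(x) ∈ 𝔽_q[x] be monic irreducible of degree r with g(0) ≠ 0, let l ≥ 1, and let α ∈ 𝔽_q satisfy 𝔽_q = 𝔽_p(α). For all parameters 0 ≤ i < δ, 0 ≤ j < r, 1 ≤ k < l with p ∤ k, the multiplicative order of the class of a_{i,j,k}(x) = 1 + α^i x^j g(x)^k in the unit group of 𝔽_q[x]/(g(x)^l) equals p^{⌈log_p(l/k)⌉}, i.e. p^m where m is the least natural number with k·p^m ≥ l. -/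
open Polynomial

/-!
In characteristic `p` the Frobenius gives `(1 + a) ^ p ^ e = 1 + a ^ p ^ e`, so the order of a
unipotent element `1 + a` is `p ^ m` for the least `m` with `a ^ p ^ m = 0`. For
`a = α^i X^j g^k` in `𝔽_q[x]/(g^l)`, the cofactor `α^i X^j` is prime to `g` (as `α^i ≠ 0` and
`g(0) ≠ 0`), so `a ^ N` vanishes exactly when `l ≤ k N`.
-/

theorem orderOf_one_add_of_pow_expChar_pow_eq_zero {R : Type*} [CommRing R] {p : ℕ}
    (hp : p.Prime) [ExpChar R p] {a : R} {m : ℕ} (hm : a ^ p ^ m = 0)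
    (hmin : ∀ e < m, a ^ p ^ e ≠ 0) : orderOf (1 + a) = p ^ m := by
  have frobenius (e : ℕ) : (1 + a) ^ p ^ e = 1 + a ^ p ^ e := by
    rw [add_pow_expChar_pow, one_pow]
  have hdvd : orderOf (1 + a) ∣ p ^ m :=
    orderOf_dvd_of_pow_eq_one (by rw [frobenius, hm, add_zero])
  obtain ⟨e, he, horder⟩ := (Nat.dvd_prime_pow hp).mp hdvd
  rw [horder]
  refine congrArg _ (he.antisymm (not_lt.mp fun hlt => hmin e hlt ?_))
  have h := pow_orderOf_eq_one (1 + a)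
  rwa [horder, frobenius, add_eq_left] at h

theorem Prime.pow_dvd_mul_pow_iff {M : Type*} [CommMonoidWithZero M] [IsCancelMulZero M]
    {g u : M} (hg : Prime g) (hu : ¬ g ∣ u) {l n : ℕ} : g ^ l ∣ u * g ^ n ↔ l ≤ n :=
  ⟨fun h => (pow_dvd_pow_iff hg.ne_zero hg.not_isUnit).mp (hg.pow_dvd_of_dvd_mul_left l hu h),
    fun h => (pow_dvd_pow g h).trans (dvd_mul_left _ _)⟩

theorem Ideal.Quotient.mk_mul_pow_pow_eq_zero_iff {R : Type*} [CommRing R] [IsDomain R]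
    {g u : R} (hg : Prime g) (hu : ¬ g ∣ u) (l k N : ℕ) :
    Ideal.Quotient.mk (Ideal.span {g ^ l}) (u * g ^ k) ^ N = 0 ↔ l ≤ k * N := by
  rw [← map_pow, Ideal.Quotient.eq_zero_iff_mem, Ideal.mem_span_singleton, mul_pow, ← pow_mul]
  exact hg.pow_dvd_mul_pow_iff fun h => hu (hg.dvd_of_dvd_pow h)

theorem Polynomial.not_dvd_C_mul_X_pow {F : Type*} [Field F] {g : F[X]} (hg : Prime g)
    (hg0 : g.coeff 0 ≠ 0) {c : F} (hc : c ≠ 0) (j : ℕ) : ¬ g ∣ C c * X ^ j := by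
  intro h
  rcases hg.dvd_or_dvd h with hC | hX
  · exact hg.not_isUnit (isUnit_of_dvd_unit hC (isUnit_C.mpr hc.isUnit))
  · have hXg : X ∣ g := (hg.irreducible.associated_of_dvd irreducible_X
      (hg.dvd_of_dvd_pow hX)).symm.dvd
    exact hg0 (X_dvd_iff.mp hXg)

theorem card_le_of_forall_eq_natCast {F : Type*} [Field F] [Fintype F] {p : ℕ} [Fact p.Prime]
    [CharP F p] (h : ∀ y : F, ∃ n : ℕ, y = n) : Fintype.card F ≤ p := by
  have hsurj : Function.Surjective (ZMod.castHom (dvd_refl p) F) := fun y => by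
    obtain ⟨n, rfl⟩ := h y
    exact ⟨n, map_natCast _ n⟩
  simpa using Fintype.card_le_of_surjective _ hsurj

theorem ne_zero_of_forall_eq_sum_pow {F : Type*} [Field F] [Fintype F] {p δ : ℕ}
    (hp : p.Prime) [CharP F p] (hcard : Fintype.card F = p ^ δ) (hδ : 2 ≤ δ) {α : F}
    (hα : ∀ y : F, ∃ c : Fin δ → ℕ, y = ∑ i, (c i : F) * α ^ (i : ℕ)) : α ≠ 0 := by
  have := Fact.mk hp
  rintro rfl
  have hcast (y : F) : ∃ n : ℕ, y = n := by
    obtain ⟨c, rfl⟩ := hα y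
    have h0 : 0 < δ := by omega
    refine ⟨c ⟨0, h0⟩, (Finset.sum_eq_single ⟨0, h0⟩ (fun b _ hb => ?_) (by simp)).trans ?_⟩
    · simp [zero_pow (Fin.val_ne_iff.mpr hb)]
    · simp
  have h := card_le_of_forall_eq_natCast hcast
  rw [hcard] at h
  have := (Nat.pow_le_pow_iff_right hp.one_lt).mp (h.trans_eq (pow_one p).symm)
  omega

theorem stmt_16_general
    (p δ : ℕ) (hp : p.Prime)
    (F : Type) [Field F] [Fintype F] [CharP F p] (hcard : Fintype.card F = p ^ δ)
    (α : F) (hα : ∀ y : F, ∃ c : Fin δ → ℕ, y = ∑ i, (c i : F) * α ^ (i : ℕ))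
    (l : ℕ) (g : Polynomial F)
    (hirr : Irreducible g)
    (hg0 : g.coeff 0 ≠ 0) (hl : 1 ≤ l)
    (i j k : ℕ) (hi : i < δ) (hk1 : 1 ≤ k) :
    orderOf (Ideal.Quotient.mk (Ideal.span {g ^ l})
        (1 + Polynomial.C (α ^ i) * X ^ j * g ^ k))
      = p ^ sInf {m : ℕ | l ≤ k * p ^ m} := by
  have hαi : α ^ i ≠ 0 := by
    rcases Nat.eq_zero_or_pos i with rfl | hi0
    · simp
    · exact pow_ne_zero _ (ne_zero_of_forall_eq_sum_pow hp hcard (lt_of_le_of_lt hi0 hi) hα)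
  have hnilp := Ideal.Quotient.mk_mul_pow_pow_eq_zero_iff hirr.prime
    (not_dvd_C_mul_X_pow hirr.prime hg0 hαi j) l k
  have : Nontrivial (F[X] ⧸ Ideal.span {g ^ l}) := Ideal.Quotient.nontrivial_iff.mpr <| by
    rw [Ne, Ideal.span_singleton_eq_top, isUnit_pow_iff (Nat.one_le_iff_ne_zero.mp hl)]
    exact hirr.not_isUnit
  have := Fact.mk hp
  have := charP_of_injective_algebraMap (algebraMap F (F[X] ⧸ Ideal.span {g ^ l})).injective p
  have hS : {m : ℕ | l ≤ k * p ^ m}.Nonempty :=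
    ⟨l, (Nat.lt_pow_self hp.one_lt).le.trans (Nat.le_mul_of_pos_left _ hk1)⟩
  rw [map_add, map_one]
  exact orderOf_one_add_of_pow_expChar_pow_eq_zero hp ((hnilp _).mpr (Nat.sInf_mem hS))
    fun e he h => Nat.notMem_of_lt_sInf he ((hnilp _).mp h)

/-- For `0 ≤ i < δ`, `0 ≤ j < r`, `1 ≤ k < l` with `p ∤ k`, the multiplicative
order of the class of `a_{i,j,k}(x) = 1 + α^i x^j g(x)^k` in `𝔽_q[x]/(g(x)^l)`
equals `p^{⌈log_p(l/k)⌉}`, i.e. `p^m` where `m` is the least natural number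
with `k·p^m ≥ l`. -/
theorem stmt_16
    (p δ : ℕ) (hp : p.Prime) (hδ : 1 ≤ δ)
    (F : Type) [Field F] [Fintype F] [CharP F p] (hcard : Fintype.card F = p ^ δ)
    (α : F) (hα : ∀ y : F, ∃ c : Fin δ → ℕ, y = ∑ i, (c i : F) * α ^ (i : ℕ))
    (r l : ℕ) (g : Polynomial F)
    (hmonic : g.Monic) (hirr : Irreducible g) (hdeg : g.natDegree = r)
    (hg0 : g.coeff 0 ≠ 0) (hl : 1 ≤ l)
    (i j k : ℕ) (hi : i < δ) (hj : j < r) (hk1 : 1 ≤ k) (hkl : k < l)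
    (hpk : ¬ p ∣ k) :
    orderOf (Ideal.Quotient.mk (Ideal.span {g ^ l})
        (1 + Polynomial.C (α ^ i) * X ^ j * g ^ k))
      = p ^ sInf {m : ℕ | l ≤ k * p ^ m} :=
  stmt_16_general p δ hp F hcard α hα l g hirr hg0 hl i j k hi hk1
end

section
/- Let g(x) ∈ 𝔽_q[x] be monic irreducible of degree r with g(0) ≠ 0 and let l ≥ 1. Then the multiplicative order of the class of x in the unit group M_{g^l} of 𝔽_q[x]/(g(x)^l) equals ord(g(x)) · p^{⌈log_p l⌉}, where ord(g) is the least e ≥ 1 with g(x) dividing x^e − 1 and ⌈log_p l⌉ is the least m ∈ ℕ with p^m ≥ l. -/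
/-!
Let `e` be the order of `x` modulo `g`. Write `n ≠ 0` as `p ^ a * u` with `p ∤ u`. In characteristic
`p`, `X ^ n - 1 = (X ^ u - 1) ^ p ^ a`, and `X ^ u - 1` is separable since `p ∤ u`. Hence `g ^ l`
divides `X ^ n - 1` exactly when `g ∣ X ^ u - 1`, i.e. `e ∣ u`, and `l ≤ p ^ a`. So the `n` with
`x ^ n ≡ 1 mod g ^ l` are exactly the multiples of `e * p ^ m`, where `m = ⌈log_p l⌉`.
-/

open Polynomial

theorem Ideal.Quotient.mk_span_singleton_pow_eq_one_iff {R : Type*} [CommRing R] (f a : R)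
    (n : ℕ) : Ideal.Quotient.mk (Ideal.span {f}) a ^ n = 1 ↔ f ∣ a ^ n - 1 := by
  rw [← map_pow, ← map_one (Ideal.Quotient.mk _), Ideal.Quotient.mk_eq_mk_iff_sub_mem,
    Ideal.mem_span_singleton]

theorem Ideal.Quotient.orderOf_mk_span_singleton_dvd_iff {R : Type*} [CommRing R] (f a : R)
    (n : ℕ) : orderOf (Ideal.Quotient.mk (Ideal.span {f}) a) ∣ n ↔ f ∣ a ^ n - 1 := by
  rw [orderOf_dvd_iff_pow_eq_one, mk_span_singleton_pow_eq_one_iff]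

theorem sInf_pow_eq_one_eq_orderOf {G : Type*} [Monoid G] (x : G) :
    sInf {n : ℕ | 1 ≤ n ∧ x ^ n = 1} = orderOf x := by
  by_cases hx : IsOfFinOrder x
  · refine le_antisymm (Nat.sInf_le ⟨hx.orderOf_pos, pow_orderOf_eq_one x⟩) ?_
    exact le_csInf ⟨_, hx.orderOf_pos, pow_orderOf_eq_one x⟩
      fun n hn ↦ orderOf_le_of_pow_eq_one hn.1 hn.2
  · have hempty : {n : ℕ | 1 ≤ n ∧ x ^ n = 1} = ∅ :=
      Set.eq_empty_of_forall_notMem fun n hn ↦ hx (isOfFinOrder_iff_pow_eq_one.2 ⟨n, hn⟩)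
    rw [hempty, Nat.sInf_empty, orderOf_eq_zero_iff.2 hx]

theorem Nat.sInf_le_pow_eq_clog {b : ℕ} (hb : 1 < b) (n : ℕ) :
    sInf {m : ℕ | n ≤ b ^ m} = Nat.clog b n := by
  have : {m : ℕ | n ≤ b ^ m} = Set.Ici (Nat.clog b n) := by
    ext m
    exact (Nat.clog_le_iff_le_pow hb).symm
  rw [this, csInf_Ici]

theorem pow_mul_char_pow_sub_one {R : Type*} [CommRing R] (p : ℕ) [Fact p.Prime] [CharP R p]
    (a : R) (n k : ℕ) : a ^ (n * p ^ k) - 1 = (a ^ n - 1) ^ p ^ k := by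
  rw [sub_pow_char_pow, one_pow, pow_mul]

theorem Prime.pow_dvd_pow_iff_le_of_squarefree {R : Type*} [CommMonoidWithZero R]
    [IsCancelMulZero R] {g f : R} (hg : Prime g) (hgf : g ∣ f) (hf : Squarefree f) {l k : ℕ} :
    g ^ l ∣ f ^ k ↔ l ≤ k := by
  refine ⟨fun h ↦ ?_, fun h ↦ (pow_dvd_pow g h).trans (pow_dvd_pow_of_dvd hgf k)⟩
  obtain ⟨w, rfl⟩ := hgf
  have hgw : ¬ g ∣ w := fun ⟨w', hw'⟩ ↦ hg.not_isUnit (hf g ⟨w', by rw [hw', mul_assoc]⟩)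
  by_contra! hkl
  have : g ^ k * g ∣ g ^ k * w ^ k := by
    rw [← pow_succ, ← mul_pow]
    exact (pow_dvd_pow g hkl).trans h
  exact hgw (hg.dvd_of_dvd_pow ((mul_dvd_mul_iff_left (pow_ne_zero k hg.ne_zero)).1 this))

section

variable {F : Type*} [Field F] {p : ℕ} [Fact p.Prime] [CharP F p] {g : F[X]}

theorem pow_dvd_X_pow_sub_one_iff (hg : Irreducible g) {l : ℕ} (hl : 1 ≤ l) (a : ℕ) {u : ℕ}
    (hu : ¬ p ∣ u) :
    g ^ l ∣ X ^ (p ^ a * u) - 1 ↔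
      orderOf (Ideal.Quotient.mk (Ideal.span {g}) X) ∣ u ∧ l ≤ p ^ a := by
  have hsq : Squarefree (X ^ u - 1 : F[X]) :=
    (X_pow_sub_one_separable_iff.2 (by rwa [Ne, CharP.cast_eq_zero_iff F p])).squarefree
  rw [mul_comm, pow_mul_char_pow_sub_one p, Ideal.Quotient.orderOf_mk_span_singleton_dvd_iff]
  constructor
  · intro h
    have hgu : g ∣ X ^ u - 1 :=
      hg.prime.dvd_of_dvd_pow ((dvd_pow_self g (by omega)).trans h)
    exact ⟨hgu, (Prime.pow_dvd_pow_iff_le_of_squarefree hg.prime hgu hsq).1 h⟩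
  · rintro ⟨hgu, hla⟩
    exact (Prime.pow_dvd_pow_iff_le_of_squarefree hg.prime hgu hsq).2 hla

theorem orderOf_mk_span_pow_X (hg : Irreducible g) {l : ℕ} (hl : 1 ≤ l) :
    orderOf (Ideal.Quotient.mk (Ideal.span {g ^ l}) X) =
      orderOf (Ideal.Quotient.mk (Ideal.span {g}) X) * p ^ Nat.clog p l := by
  have hp : p.Prime := Fact.out
  apply Nat.dvd_antisymm
  · rw [Ideal.Quotient.orderOf_mk_span_singleton_dvd_iff, pow_mul_char_pow_sub_one p]
    exact (pow_dvd_pow g (Nat.le_pow_clog hp.one_lt l)).trans <| pow_dvd_pow_of_dvd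
      ((Ideal.Quotient.orderOf_mk_span_singleton_dvd_iff g X _).1 dvd_rfl) _
  · obtain hN | hN := eq_or_ne (orderOf (Ideal.Quotient.mk (Ideal.span {g ^ l}) X)) 0
    · rw [hN]
      exact dvd_zero _
    obtain ⟨a, u, hu, hau⟩ := Nat.exists_eq_pow_mul_and_not_dvd hN p hp.ne_one
    have h : g ^ l ∣ X ^ (p ^ a * u) - 1 := by
      rw [← hau, ← Ideal.Quotient.orderOf_mk_span_singleton_dvd_iff]
    obtain ⟨heu, hla⟩ := (pow_dvd_X_pow_sub_one_iff hg hl a hu).1 h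
    rw [hau, mul_comm (p ^ a)]
    exact mul_dvd_mul heu (pow_dvd_pow p (Nat.clog_le_of_le_pow hla))

end

theorem stmt_17_general
    (p : ℕ) (hp : p.Prime)
    (F : Type) [Field F] [CharP F p]
    (l : ℕ) (g : Polynomial F)
    (hirr : Irreducible g) (hl : 1 ≤ l) :
    orderOf (Ideal.Quotient.mk (Ideal.span {g ^ l}) X)
      = sInf {e : ℕ | 1 ≤ e ∧ g ∣ X ^ e - 1} * p ^ sInf {m : ℕ | l ≤ p ^ m} := by
  have : Fact p.Prime := ⟨hp⟩
  simp_rw [← Ideal.Quotient.mk_span_singleton_pow_eq_one_iff]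
  rw [sInf_pow_eq_one_eq_orderOf, Nat.sInf_le_pow_eq_clog hp.one_lt]
  exact orderOf_mk_span_pow_X hirr hl

/-- The multiplicative order of the class of `x` in the unit group of
`𝔽_q[x]/(g(x)^l)` (`g` monic irreducible with `g(0) ≠ 0`) equals
`ord(g) · p^{⌈log_p l⌉}`, where `ord(g)` is the least `e ≥ 1` with
`g(x) ∣ x^e - 1` and `⌈log_p l⌉` is the least `m` with `p^m ≥ l`. -/
theorem stmt_17
    (p δ : ℕ) (hp : p.Prime) (hδ : 1 ≤ δ)
    (F : Type) [Field F] [Fintype F] [CharP F p] (hcard : Fintype.card F = p ^ δ)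
    (r l : ℕ) (g : Polynomial F)
    (hmonic : g.Monic) (hirr : Irreducible g) (hdeg : g.natDegree = r)
    (hg0 : g.coeff 0 ≠ 0) (hl : 1 ≤ l) :
    orderOf (Ideal.Quotient.mk (Ideal.span {g ^ l}) X)
      = sInf {e : ℕ | 1 ≤ e ∧ g ∣ X ^ e - 1} * p ^ sInf {m : ℕ | l ≤ p ^ m} :=
  stmt_17_general p hp F l g hirr hl
end
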